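/- arXiv:2011.06965 — 6 statements merged into one kernel-verified Lean document; each statement's English description precedes it below -/
import Mathlib

section
/- Comparison principle for delay integro-differential operators: Let ε, T > 0 and let φ(a,t,u) be a function of (a,t,u) ∈ [0,∞) × (0,T] × ℝ that is measurable with respect to (a,t) and, for each fixed (a,t), is odd and nondecreasing as a function of u. For a function z : ℝ → ℝ that is continuous on (-∞,T], differentiable on (0,T], and such that all integrals below are defined, set H[z](t) := ż(t) + ∫₀^∞ φ(a, t, (z(t) − z(t − εa))/ε) da for 0 < t ≤ T. If H[z](t) ≥ 0 for all t ∈ (0,T] and z(t) ≥ 0 for all t ≤ 0, then z(t) ≥ 0 for all t ≤ T. -/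
open MeasureTheory Set Filter
open scoped Topology

/-!
Perturb `z` to `w t = z t + δ (1 + t)`, which is positive at `0`. If `w` vanished somewhere on
`[0, T]`, at its first zero `t₀` the function `z` would attain its minimum over `(-∞, t₀]`, so
every argument `(z t₀ - z (t₀ - ε a)) / ε` is `≤ 0` and the integral is `≤ 0`; hence `ż t₀ ≥ 0`
and `ẇ t₀ ≥ δ > 0`, contradicting that `w` reaches `0` from above. Let `δ → 0`.
-/

lemma exists_first_nonpos_of_continuousOn {w : ℝ → ℝ} {a b t : ℝ}
    (hw : ContinuousOn w (Icc a b)) (ha : 0 < w a) (ht : t ∈ Icc a b) (hwt : w t ≤ 0) :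
    ∃ t₀ ∈ Ioc a b, w t₀ ≤ 0 ∧ ∀ s ∈ Ico a t₀, 0 < w s := by
  set S := Icc a b ∩ w ⁻¹' Iic 0
  have hSbdd : BddBelow S := ⟨a, fun s hs => hs.1.1⟩
  have ht₀ : sInf S ∈ S :=
    (hw.preimage_isClosed_of_isClosed isClosed_Icc isClosed_Iic).csInf_mem ⟨t, ht, hwt⟩ hSbdd
  have hbefore : ∀ s ∈ Ico a (sInf S), 0 < w s := fun s hs =>
    not_le.1 fun hws => (csInf_le hSbdd ⟨⟨hs.1, hs.2.le.trans ht₀.1.2⟩, hws⟩).not_gt hs.2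
  have ha_lt : a < sInf S := ht₀.1.1.lt_of_ne fun h => ha.not_ge (h ▸ ht₀.2)
  exact ⟨sInf S, ⟨ha_lt, ht₀.1.2⟩, ht₀.2, hbefore⟩

lemma HasDerivAt.nonpos_of_eventually_ge_left {g : ℝ → ℝ} {g' x : ℝ} (hd : HasDerivAt g g' x)
    (hg : ∀ᶠ s in 𝓝[<] x, g x ≤ g s) : g' ≤ 0 := by
  refine le_of_tendsto ((hasDerivAt_iff_tendsto_slope_left_right.1 hd).1) ?_
  filter_upwards [hg, self_mem_nhdsWithin] with s hs hsx
  rw [slope_def_field]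
  exact div_nonpos_of_nonneg_of_nonpos (sub_nonneg.2 hs) (sub_nonpos.2 (le_of_lt hsx))

lemma setIntegral_delay_nonpos_of_isMinOn {μ : Measure ℝ} {ψ : ℝ → ℝ → ℝ}
    (hψ0 : ∀ a, ψ a 0 = 0) (hψmono : ∀ a, Monotone (ψ a)) {ε t : ℝ} (hε : 0 < ε) {z : ℝ → ℝ}
    (hmin : IsMinOn z (Iic t) t) :
    ∫ a in Ioi 0, ψ a ((z t - z (t - ε * a)) / ε) ∂μ ≤ 0 := by
  refine setIntegral_nonpos measurableSet_Ioi fun a (ha : 0 < a) => ?_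
  have hdiff : z t - z (t - ε * a) ≤ 0 :=
    sub_nonpos.2 (hmin (show t - ε * a ≤ t by nlinarith))
  calc ψ a ((z t - z (t - ε * a)) / ε)
      _ ≤ ψ a 0 := hψmono a (div_nonpos_of_nonpos_of_nonneg hdiff hε.le)
      _ = 0 := hψ0 a

lemma delay_supersolution_perturbed_pos {ε T δ : ℝ} (hε : 0 < ε) (hδ : 0 < δ)
    {φ : ℝ → ℝ → ℝ → ℝ} (hφ0 : ∀ a t, φ a t 0 = 0) (hφmono : ∀ a t, Monotone (φ a t))
    {z : ℝ → ℝ} (hzcont : ContinuousOn z (Iic T))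
    (hzdiff : ∀ t ∈ Ioc (0:ℝ) T, DifferentiableAt ℝ z t)
    (hH : ∀ t ∈ Ioc (0:ℝ) T,
      0 ≤ deriv z t + ∫ a in Ioi (0:ℝ), φ a t ((z t - z (t - ε * a)) / ε))
    (hpast : ∀ t ≤ (0:ℝ), 0 ≤ z t) {t : ℝ} (ht : t ∈ Icc 0 T) :
    0 < z t + δ * (1 + t) := by
  by_contra! hwt
  obtain ⟨t₀, ht₀, hwt₀, hbefore⟩ := exists_first_nonpos_of_continuousOn
    (w := fun s => z s + δ * (1 + s)) ((hzcont.mono Icc_subset_Iic_self).add (by fun_prop))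
    (by linarith [hpast 0 le_rfl]) ht hwt
  have hmin : IsMinOn z (Iic t₀) t₀ := isMinOn_iff.2 fun s (hs : s ≤ t₀) => by
    rcases le_or_gt s 0 with hs0 | hs0
    · nlinarith [hpast s hs0, ht₀.1]
    rcases hs.eq_or_lt with rfl | hst
    · exact le_rfl
    · nlinarith [hbefore s ⟨hs0.le, hst⟩]
  have hzderiv : 0 ≤ deriv z t₀ := by
    linarith [hH t₀ ht₀,
      setIntegral_delay_nonpos_of_isMinOn (μ := volume) (hφ0 · t₀) (hφmono · t₀) hε hmin]
  have hwderiv : HasDerivAt (fun s => z s + δ * (1 + s)) (deriv z t₀ + δ * 1) t₀ :=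
    (hzdiff t₀ ht₀).hasDerivAt.add (((hasDerivAt_id' t₀).const_add 1).const_mul δ)
  have hwleft : ∀ᶠ s in 𝓝[<] t₀, z t₀ + δ * (1 + t₀) ≤ z s + δ * (1 + s) := by
    filter_upwards [Ioo_mem_nhdsLT ht₀.1] with s hs
    exact hwt₀.trans (hbefore s ⟨hs.1.le, hs.2⟩).le
  linarith [hwderiv.nonpos_of_eventually_ge_left hwleft]

theorem stmt_0_general
    (ε T : ℝ) (hε : 0 < ε)
    (φ : ℝ → ℝ → ℝ → ℝ)
    (hφodd : ∀ a t u, φ a t (-u) = - φ a t u)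
    (hφmono : ∀ a t, Monotone (φ a t))
    (z : ℝ → ℝ)
    (hzcont : ContinuousOn z (Iic T))
    (hzdiff : ∀ t ∈ Ioc (0:ℝ) T, DifferentiableAt ℝ z t)
    (hH : ∀ t ∈ Ioc (0:ℝ) T,
      0 ≤ deriv z t + ∫ a in Ioi (0:ℝ), φ a t ((z t - z (t - ε * a)) / ε))
    (hpast : ∀ t ≤ (0:ℝ), 0 ≤ z t) :
    ∀ t ≤ T, 0 ≤ z t := by
  have hφ0 : ∀ a t, φ a t 0 = 0 := fun a t =>
    self_eq_neg.1 (by simpa using hφodd a t 0)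
  intro t ht
  rcases le_or_gt t 0 with ht0 | ht0
  · exact hpast t ht0
  refine le_of_forall_pos_lt_add fun η hη => ?_
  have h1t : 0 < 1 + t := by linarith
  have := delay_supersolution_perturbed_pos hε (div_pos hη h1t) hφ0 hφmono hzcont hzdiff hH hpast
    ⟨ht0.le, ht⟩
  rwa [div_mul_cancel₀ _ h1t.ne'] at this

/-- Comparison principle for the delay integro-differential operator
`H[z](t) = ż(t) + ∫₀^∞ φ(a, t, (z(t) − z(t − εa))/ε) da`. -/
theorem stmt_0
    (ε T : ℝ) (hε : 0 < ε) (hT : 0 < T)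
    (φ : ℝ → ℝ → ℝ → ℝ)
    (hφmeas : ∀ u : ℝ, Measurable (fun p : ℝ × ℝ => φ p.1 p.2 u))
    (hφodd : ∀ a t u, φ a t (-u) = - φ a t u)
    (hφmono : ∀ a t, Monotone (φ a t))
    (z : ℝ → ℝ)
    (hzcont : ContinuousOn z (Iic T))
    (hzdiff : ∀ t ∈ Ioc (0:ℝ) T, DifferentiableAt ℝ z t)
    (hint : ∀ t ∈ Ioc (0:ℝ) T,
      IntegrableOn (fun a => φ a t ((z t - z (t - ε * a)) / ε)) (Ioi 0))
    (hH : ∀ t ∈ Ioc (0:ℝ) T,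
      0 ≤ deriv z t + ∫ a in Ioi (0:ℝ), φ a t ((z t - z (t - ε * a)) / ε))
    (hpast : ∀ t ≤ (0:ℝ), 0 ≤ z t) :
    ∀ t ≤ T, 0 ≤ z t :=
  stmt_0_general ε T hε φ hφodd hφmono z hzcont hzdiff hH hpast
end

section
/- Existence and uniqueness for the limiting implicit ODE: Under Assumptions (A), and assuming in addition that ψ' is Lipschitz continuous on ℝ, there exists a unique solution z₀ ∈ C¹(I_T) of the problem ż₀(t) + ∫₀^∞ ψ'(a ż₀(t)) ρ(a,t) da = v(t) for t > 0, with z₀(0) = z_p(0). Moreover the solution satisfies |ż₀(t)| ≤ |v(t)| for all t. -/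
/-!
As `ψ` is convex and even, `ψ'` is monotone and vanishes at `0`. Hence for each `t` the map `F_t u
= u + ∫₀^∞ ψ'(a u) ρ(a,t) da` is continuous with `F_t 0 = 0` and expansive, `|u - u'| ≤ |F_t u -
F_t u'|`. So `F_t u = v t` has exactly one root `w t`, which lies in `[-|v t|, |v t|]` by the
intermediate value theorem, and expansiveness turns the continuity of `t ↦ ρ(·,t)` in `L¹((1 + a²)
da)` into continuity of `w`. Then `z₀ t = z_p 0 + ∫₀^t w` is a `C¹` solution, and any solution has
derivative `w` on `(0, T]`, so agrees with `z₀` by the mean value theorem.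
-/

open MeasureTheory Set Filter Topology
open scoped NNReal

lemma HasDerivAt.eq_zero_of_even {f : ℝ → ℝ} {f' : ℝ} (hf : ∀ x, f (-x) = f x)
    (hf' : HasDerivAt f f' 0) : f' = 0 := by
  have hneg : HasDerivAt (f ∘ Neg.neg) (f' * -1) 0 :=
    (neg_zero (G := ℝ) ▸ hf').comp 0 (hasDerivAt_neg 0)
  rw [show f ∘ Neg.neg = f from funext hf] at hneg
  linarith [hf'.unique hneg]

lemma ConvexOn.monotone_of_hasDerivAt {f f' : ℝ → ℝ} (hf : ConvexOn ℝ univ f)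
    (hf' : ∀ x, HasDerivAt f (f' x) x) : Monotone f' := by
  intro x y hxy
  simpa only [(hf' _).deriv] using
    hf.monotoneOn_deriv (fun x _ => (hf' x).differentiableAt) (mem_univ x) (mem_univ y) hxy

section ImplicitEquation

variable {G : ℝ → ℝ}

lemma Monotone.abs_sub_le_abs_add_sub (hG : Monotone G) (x y : ℝ) :
    |x - y| ≤ |(x + G x) - (y + G y)| := by
  rcases le_total x y with h | h
  · have := hG h
    rw [abs_of_nonpos (by linarith), abs_of_nonpos (by linarith)]
    linarith
  · have := hG h
    rw [abs_of_nonneg (by linarith), abs_of_nonneg (by linarith)]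
    linarith

lemma Monotone.exists_add_eq_abs_le (hG : Monotone G) (hGc : Continuous G) (hG0 : G 0 = 0)
    (y : ℝ) : ∃ u, u + G u = y ∧ |u| ≤ |y| := by
  have hlo : -|y| + G (-|y|) ≤ y := by
    linarith [hG (neg_nonpos.2 (abs_nonneg y)), neg_abs_le y]
  have hhi : y ≤ |y| + G |y| := by
    linarith [hG (abs_nonneg y), le_abs_self y]
  obtain ⟨u, hu, hFu⟩ := intermediate_value_Icc (neg_le_self (abs_nonneg y))
    (continuous_id.add hGc).continuousOn ⟨hlo, hhi⟩
  exact ⟨u, hFu, abs_le.2 hu⟩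

end ImplicitEquation

lemma continuousWithinAt_of_add_eq {G : ℝ → ℝ → ℝ} {w v : ℝ → ℝ} {s : Set ℝ} {t₀ : ℝ}
    (hG : Monotone (G t₀)) (hw : ∀ t ∈ s, w t + G t (w t) = v t) (ht₀ : t₀ ∈ s)
    (hv : ContinuousWithinAt v s t₀)
    (hGt : Tendsto (fun t => G t (w t) - G t₀ (w t)) (𝓝[s] t₀) (𝓝 0)) :
    ContinuousWithinAt w s t₀ := by
  have hbound : ∀ t ∈ s, dist (w t) (w t₀) ≤ |G t (w t) - G t₀ (w t)| + dist (v t) (v t₀) := by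
    intro t ht
    have hrw : (w t + G t₀ (w t)) - (w t₀ + G t₀ (w t₀)) =
        (v t - v t₀) - (G t (w t) - G t₀ (w t)) := by
      linarith [hw t ht, hw t₀ ht₀]
    rw [Real.dist_eq, Real.dist_eq]
    calc |w t - w t₀| ≤ |(w t + G t₀ (w t)) - (w t₀ + G t₀ (w t₀))| :=
          hG.abs_sub_le_abs_add_sub _ _
      _ ≤ |G t (w t) - G t₀ (w t)| + |v t - v t₀| := by
          rw [hrw]; linarith [abs_sub (v t - v t₀) (G t (w t) - G t₀ (w t))]
  refine tendsto_iff_dist_tendsto_zero.2 (squeeze_zero' (.of_forall fun _ => dist_nonneg)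
    (eventually_nhdsWithin_of_forall hbound) ?_)
  simpa using hGt.abs.add (tendsto_iff_dist_tendsto_zero.1 hv)

section Primitive

variable {a b : ℝ}

lemma exists_deriv_eqOn_Icc (hab : a ≤ b) {w : ℝ → ℝ} (hw : ContinuousOn w (Icc a b)) (c : ℝ) :
    ∃ z : ℝ → ℝ, z a = c ∧ Differentiable ℝ z ∧ Continuous (deriv z) ∧
      EqOn (deriv z) w (Icc a b) := by
  set g := IccExtend hab (fun x : Icc a b => w x)
  have hg : Continuous g := (continuousOn_iff_continuous_domRestrict.1 hw).Icc_extend'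
  have hz : ∀ t, HasDerivAt (fun t => c + ∫ s in a..t, g s) (g t) t := fun t =>
    ((hg.integral_hasStrictDerivAt a t).hasDerivAt).const_add c
  have hderiv : deriv (fun t => c + ∫ s in a..t, g s) = g := funext fun t => (hz t).deriv
  refine ⟨_, by simp, fun t => (hz t).differentiableAt, by rw [hderiv]; exact hg, fun t ht => ?_⟩
  rw [hderiv]
  exact IccExtend_of_mem hab _ ht

lemma eqOn_Icc_of_hasDerivAt_Ioo {f g f' : ℝ → ℝ} (hf : ContinuousOn f (Icc a b))
    (hg : ContinuousOn g (Icc a b)) (hf' : ∀ x ∈ Ioo a b, HasDerivAt f (f' x) x)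
    (hg' : ∀ x ∈ Ioo a b, HasDerivAt g (f' x) x) (ha : f a = g a) : EqOn f g (Icc a b) := by
  intro x hx
  rcases hx.1.eq_or_lt with rfl | hax
  · exact ha
  have hIoo : Ioo a x ⊆ Ioo a b := Ioo_subset_Ioo_right hx.2
  obtain ⟨c, -, hc⟩ := exists_hasDerivAt_eq_slope (fun x => f x - g x) (fun _ => 0) hax
    ((hf.sub hg).mono (Icc_subset_Icc le_rfl hx.2))
    fun y hy => ((hf' y (hIoo hy)).sub (hg' y (hIoo hy))).congr_deriv (sub_self _)
  rw [eq_comm, div_eq_zero_iff, sub_eq_zero] at hc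
  rcases hc with hc | hc
  · linarith
  · linarith

end Primitive

section WeightedIntegral

variable {ρ f : ℝ → ℝ} {c : ℝ}

lemma integrableOn_one_add_sq_mul_abs (hρ : IntegrableOn (fun a => (1 + a ^ 2) * ρ a) (Ioi 0)) :
    IntegrableOn (fun a => (1 + a ^ 2) * |ρ a|) (Ioi 0) := by
  refine IntegrableOn.congr_fun hρ.abs (fun a _ => ?_) measurableSet_Ioi
  simp only [abs_mul, abs_of_pos (by positivity : (0:ℝ) < 1 + a ^ 2)]

lemma aestronglyMeasurable_of_integrableOn_one_add_sq_mul
    (hρ : IntegrableOn (fun a => (1 + a ^ 2) * ρ a) (Ioi 0)) :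
    AEStronglyMeasurable ρ (volume.restrict (Ioi 0)) := by
  have hρ_eq : ρ = fun a => (1 + a ^ 2)⁻¹ * ((1 + a ^ 2) * ρ a) := by
    ext a
    rw [inv_mul_cancel_left₀ (by positivity)]
  rw [hρ_eq]
  exact (Continuous.inv₀ (by fun_prop) fun a => by positivity).aestronglyMeasurable.mul
    hρ.aestronglyMeasurable

lemma integrableOn_mul_of_abs_le (hρ : IntegrableOn (fun a => (1 + a ^ 2) * ρ a) (Ioi 0))
    (hf : Continuous f) (hfc : ∀ a, 0 < a → |f a| ≤ c * (1 + a ^ 2)) :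
    IntegrableOn (fun a => f a * ρ a) (Ioi 0) := by
  refine ((integrableOn_one_add_sq_mul_abs hρ).const_mul c).mono'
    (hf.aestronglyMeasurable.mul (aestronglyMeasurable_of_integrableOn_one_add_sq_mul hρ)) ?_
  filter_upwards [ae_restrict_mem measurableSet_Ioi] with a ha
  rw [Real.norm_eq_abs, abs_mul, ← mul_assoc]
  exact mul_le_mul_of_nonneg_right (hfc a ha) (abs_nonneg _)

lemma abs_setIntegral_mul_le (hρ : IntegrableOn (fun a => (1 + a ^ 2) * ρ a) (Ioi 0))
    (hfc : ∀ a, 0 < a → |f a| ≤ c * (1 + a ^ 2)) :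
    |∫ a in Ioi (0:ℝ), f a * ρ a| ≤ c * ∫ a in Ioi (0:ℝ), (1 + a ^ 2) * |ρ a| := by
  rw [← integral_const_mul, ← Real.norm_eq_abs]
  refine norm_integral_le_of_norm_le ((integrableOn_one_add_sq_mul_abs hρ).const_mul c) ?_
  filter_upwards [ae_restrict_mem measurableSet_Ioi] with a ha
  rw [Real.norm_eq_abs, abs_mul, ← mul_assoc]
  exact mul_le_mul_of_nonneg_right (hfc a ha) (abs_nonneg _)

end WeightedIntegral

section KernelIntegral

variable {φ ρ σ : ℝ → ℝ} {K : ℝ≥0}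

lemma LipschitzWith.abs_sub_comp_mul_le (hφ : LipschitzWith K φ) {a : ℝ} (ha : 0 ≤ a)
    (u u' : ℝ) : |φ (a * u) - φ (a * u')| ≤ K * |u - u'| * (1 + a ^ 2) := by
  have hlip : |φ (a * u) - φ (a * u')| ≤ K * (a * |u - u'|) := by
    simpa [Real.dist_eq, ← mul_sub, abs_mul, abs_of_nonneg ha] using
      hφ.dist_le_mul (a * u) (a * u')
  have ha2 : a ≤ 1 + a ^ 2 := by nlinarith [sq_nonneg (a - 1)]
  calc |φ (a * u) - φ (a * u')| ≤ K * |u - u'| * a := by linarith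
    _ ≤ K * |u - u'| * (1 + a ^ 2) := by gcongr

lemma LipschitzWith.abs_comp_mul_le (hφ : LipschitzWith K φ) (hφ0 : φ 0 = 0) (u : ℝ) :
    ∀ a, 0 < a → |φ (a * u)| ≤ K * |u| * (1 + a ^ 2) := fun a ha => by
  simpa [hφ0] using hφ.abs_sub_comp_mul_le ha.le u 0

noncomputable def kernelIntegral (φ ρ : ℝ → ℝ) (u : ℝ) : ℝ := ∫ a in Ioi (0:ℝ), φ (a * u) * ρ a

lemma integrableOn_kernelIntegrand (hφ : LipschitzWith K φ) (hφ0 : φ 0 = 0)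
    (hρ : IntegrableOn (fun a => (1 + a ^ 2) * ρ a) (Ioi 0)) (u : ℝ) :
    IntegrableOn (fun a => φ (a * u) * ρ a) (Ioi 0) :=
  integrableOn_mul_of_abs_le hρ (hφ.continuous.comp (continuous_mul_const u))
    (hφ.abs_comp_mul_le hφ0 u)

lemma kernelIntegral_zero (hφ0 : φ 0 = 0) : kernelIntegral φ ρ 0 = 0 := by
  simp [kernelIntegral, hφ0]

lemma abs_kernelIntegral_le (hφ : LipschitzWith K φ) (hφ0 : φ 0 = 0)
    (hρ : IntegrableOn (fun a => (1 + a ^ 2) * ρ a) (Ioi 0)) (u : ℝ) :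
    |kernelIntegral φ ρ u| ≤ K * |u| * ∫ a in Ioi (0:ℝ), (1 + a ^ 2) * |ρ a| :=
  abs_setIntegral_mul_le hρ (hφ.abs_comp_mul_le hφ0 u)

lemma abs_kernelIntegral_sub_le (hφ : LipschitzWith K φ) (hφ0 : φ 0 = 0)
    (hρ : IntegrableOn (fun a => (1 + a ^ 2) * ρ a) (Ioi 0)) (u u' : ℝ) :
    |kernelIntegral φ ρ u - kernelIntegral φ ρ u'| ≤
      K * |u - u'| * ∫ a in Ioi (0:ℝ), (1 + a ^ 2) * |ρ a| := by
  rw [kernelIntegral, kernelIntegral, ← integral_sub (integrableOn_kernelIntegrand hφ hφ0 hρ u)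
    (integrableOn_kernelIntegrand hφ hφ0 hρ u')]
  simp_rw [← sub_mul]
  exact abs_setIntegral_mul_le hρ fun a ha => hφ.abs_sub_comp_mul_le ha.le u u'

lemma continuous_kernelIntegral (hφ : LipschitzWith K φ) (hφ0 : φ 0 = 0)
    (hρ : IntegrableOn (fun a => (1 + a ^ 2) * ρ a) (Ioi 0)) :
    Continuous (kernelIntegral φ ρ) := by
  refine (LipschitzWith.of_dist_le_mul
    (K := K * (∫ a in Ioi (0:ℝ), (1 + a ^ 2) * |ρ a|).toNNReal) fun u u' => ?_).continuous
  have hI : 0 ≤ ∫ a in Ioi (0:ℝ), (1 + a ^ 2) * |ρ a| :=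
    setIntegral_nonneg measurableSet_Ioi fun a _ => by positivity
  rw [Real.dist_eq, Real.dist_eq, NNReal.coe_mul, Real.coe_toNNReal _ hI]
  linarith [abs_kernelIntegral_sub_le hφ hφ0 hρ u u']

lemma monotone_kernelIntegral (hφ : LipschitzWith K φ) (hφ0 : φ 0 = 0) (hφm : Monotone φ)
    (hρ0 : ∀ a, 0 ≤ ρ a) (hρ : IntegrableOn (fun a => (1 + a ^ 2) * ρ a) (Ioi 0)) :
    Monotone (kernelIntegral φ ρ) := fun u u' huu' =>
  setIntegral_mono_on (integrableOn_kernelIntegrand hφ hφ0 hρ u)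
    (integrableOn_kernelIntegrand hφ hφ0 hρ u') measurableSet_Ioi
    fun a ha => mul_le_mul_of_nonneg_right (hφm (mul_le_mul_of_nonneg_left huu' (le_of_lt ha)))
      (hρ0 a)

lemma kernelIntegral_sub_kernelIntegral (hφ : LipschitzWith K φ) (hφ0 : φ 0 = 0)
    (hρ : IntegrableOn (fun a => (1 + a ^ 2) * ρ a) (Ioi 0))
    (hσ : IntegrableOn (fun a => (1 + a ^ 2) * σ a) (Ioi 0)) (u : ℝ) :
    kernelIntegral φ ρ u - kernelIntegral φ σ u = kernelIntegral φ (fun a => ρ a - σ a) u := by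
  rw [kernelIntegral, kernelIntegral, kernelIntegral, ← integral_sub
    (integrableOn_kernelIntegrand hφ hφ0 hρ u) (integrableOn_kernelIntegrand hφ hφ0 hσ u)]
  simp_rw [mul_sub]

lemma tendsto_kernelIntegral_sub {ρ : ℝ → ℝ → ℝ} {s : Set ℝ} {t₀ M : ℝ} {u : ℝ → ℝ}
    (hφ : LipschitzWith K φ) (hφ0 : φ 0 = 0)
    (hρ : ∀ t ∈ s, IntegrableOn (fun a => (1 + a ^ 2) * ρ a t) (Ioi 0)) (ht₀ : t₀ ∈ s)
    (hu : ∀ t ∈ s, |u t| ≤ M)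
    (hρt₀ : Tendsto (fun t => ∫ a in Ioi (0:ℝ), (1 + a ^ 2) * |ρ a t - ρ a t₀|) (𝓝[s] t₀) (𝓝 0)) :
    Tendsto (fun t => kernelIntegral φ (ρ · t) (u t) - kernelIntegral φ (ρ · t₀) (u t))
      (𝓝[s] t₀) (𝓝 0) := by
  have hbound : ∀ t ∈ s, ‖kernelIntegral φ (ρ · t) (u t) - kernelIntegral φ (ρ · t₀) (u t)‖ ≤
      K * M * ∫ a in Ioi (0:ℝ), (1 + a ^ 2) * |ρ a t - ρ a t₀| := by
    intro t ht
    have hdiff : IntegrableOn (fun a => (1 + a ^ 2) * (ρ a t - ρ a t₀)) (Ioi 0) := by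
      simp only [mul_sub]
      exact (hρ t ht).sub (hρ t₀ ht₀)
    have hI : 0 ≤ ∫ a in Ioi (0:ℝ), (1 + a ^ 2) * |ρ a t - ρ a t₀| :=
      setIntegral_nonneg measurableSet_Ioi fun a _ => by positivity
    rw [Real.norm_eq_abs, kernelIntegral_sub_kernelIntegral hφ hφ0 (hρ t ht) (hρ t₀ ht₀)]
    exact (abs_kernelIntegral_le hφ hφ0 hdiff (u t)).trans
      (mul_le_mul_of_nonneg_right (mul_le_mul_of_nonneg_left (hu t ht) K.coe_nonneg) hI)
  exact squeeze_zero_norm' (eventually_nhdsWithin_of_forall hbound)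
    (by simpa using hρt₀.const_mul (K * M))

end KernelIntegral

theorem stmt_3_general
    (T : ℝ) (hT : 0 < T)
    (ψ ψ' : ℝ → ℝ) (L' : NNReal)
    (hψeven : ∀ u, ψ (-u) = ψ u)
    (hψconv : ConvexOn ℝ Set.univ ψ)
    (hψderiv : ∀ u, HasDerivAt ψ (ψ' u) u)
    (hψ'lip : LipschitzWith L' ψ')
    (zp : ℝ → ℝ)
    (v : ℝ → ℝ) (hv : ContDiffOn ℝ 1 v (Icc 0 T))
    (ρ : ℝ → ℝ → ℝ)
    (hρnonneg : ∀ a t, 0 ≤ ρ a t)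
    (hρint : ∀ t ∈ Icc (0:ℝ) T, IntegrableOn (fun a => (1 + a ^ 2) * ρ a t) (Ioi 0))
    (hρcont : ∀ t₀ ∈ Icc (0:ℝ) T,
      Tendsto (fun t => ∫ a in Ioi (0:ℝ), (1 + a ^ 2) * |ρ a t - ρ a t₀|)
        (nhdsWithin t₀ (Icc 0 T)) (nhds 0)) :
    ∃ z : ℝ → ℝ,
      ((z 0 = zp 0) ∧
        ContinuousOn z (Icc 0 T) ∧
        ContinuousOn (deriv z) (Icc 0 T) ∧
        (∀ t ∈ Ioc (0:ℝ) T, DifferentiableAt ℝ z t ∧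
          deriv z t + ∫ a in Ioi (0:ℝ), ψ' (a * deriv z t) * ρ a t = v t)) ∧
      (∀ t ∈ Ioc (0:ℝ) T, |deriv z t| ≤ |v t|) ∧
      ∀ z₂ : ℝ → ℝ,
        ((z₂ 0 = zp 0) ∧
          ContinuousOn z₂ (Icc 0 T) ∧
          ContinuousOn (deriv z₂) (Icc 0 T) ∧
          (∀ t ∈ Ioc (0:ℝ) T, DifferentiableAt ℝ z₂ t ∧
            deriv z₂ t + ∫ a in Ioi (0:ℝ), ψ' (a * deriv z₂ t) * ρ a t = v t)) →
        ∀ t ∈ Icc (0:ℝ) T, z₂ t = z t := by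
  have hψ'0 : ψ' 0 = 0 := (hψderiv 0).eq_zero_of_even hψeven
  have hψ'mono : Monotone ψ' := hψconv.monotone_of_hasDerivAt hψderiv
  set G : ℝ → ℝ → ℝ := fun t => kernelIntegral ψ' (ρ · t)
  have hGmono : ∀ t ∈ Icc 0 T, Monotone (G t) := fun t ht =>
    monotone_kernelIntegral hψ'lip hψ'0 hψ'mono (hρnonneg · t) (hρint t ht)
  have hsolve : ∀ t ∈ Icc 0 T, ∃ u, u + G t u = v t ∧ |u| ≤ |v t| := fun t ht =>
    (hGmono t ht).exists_add_eq_abs_le (continuous_kernelIntegral hψ'lip hψ'0 (hρint t ht))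
      (kernelIntegral_zero hψ'0) (v t)
  choose! w hw hwv using hsolve
  obtain ⟨M, hM⟩ := isCompact_Icc.exists_bound_of_continuousOn hv.continuousOn
  have hwc : ContinuousOn w (Icc 0 T) := fun t₀ ht₀ =>
    continuousWithinAt_of_add_eq (hGmono t₀ ht₀) hw ht₀ (hv.continuousOn t₀ ht₀)
      (tendsto_kernelIntegral_sub hψ'lip hψ'0 hρint ht₀ (fun t ht => (hwv t ht).trans (hM t ht))
        (hρcont t₀ ht₀))
  obtain ⟨z, hz0, hzd, hzc, hzw⟩ := exists_deriv_eqOn_Icc hT.le hwc (zp 0)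
  have hIoc : Ioc 0 T ⊆ Icc 0 T := Ioc_subset_Icc_self
  refine ⟨z, ⟨hz0, hzd.continuous.continuousOn, hzc.continuousOn, fun t ht => ⟨hzd t, ?_⟩⟩,
    fun t ht => ?_, ?_⟩
  · rw [hzw (hIoc ht)]
    exact hw t (hIoc ht)
  · rw [hzw (hIoc ht)]
    exact hwv t (hIoc ht)
  rintro z₂ ⟨hz₂0, hz₂c, -, hz₂⟩
  have hderiv : ∀ t ∈ Ioc 0 T, deriv z₂ t = w t := fun t ht =>
    (strictMono_id.add_monotone (hGmono t (hIoc ht))).injective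
      ((hz₂ t ht).2.trans (hw t (hIoc ht)).symm)
  refine eqOn_Icc_of_hasDerivAt_Ioo hz₂c hzd.continuous.continuousOn (f' := w)
    (fun t ht => ?_) (fun t ht => ?_) (hz₂0.trans hz0.symm)
  · rw [← hderiv t (Ioo_subset_Ioc_self ht)]
    exact (hz₂ t (Ioo_subset_Ioc_self ht)).1.hasDerivAt
  · rw [← hzw (Ioo_subset_Icc_self ht)]
    exact (hzd t).hasDerivAt

/-- Existence and uniqueness of a `C¹` solution of the limiting implicit ODE
`ż₀(t) + ∫₀^∞ ψ'(a ż₀(t)) ρ(a,t) da = v(t)` for `t > 0`, with `z₀(0) = z_p(0)`,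
together with the stability bound `|ż₀(t)| ≤ |v(t)|`. -/
theorem stmt_3
    (T : ℝ) (hT : 0 < T)
    (ψ ψ' : ℝ → ℝ) (L' : NNReal)
    (hψeven : ∀ u, ψ (-u) = ψ u)
    (hψconv : ConvexOn ℝ Set.univ ψ)
    (hψ0 : ψ 0 = 0) (hψnonneg : ∀ u, 0 ≤ ψ u)
    (hψderiv : ∀ u, HasDerivAt ψ (ψ' u) u)
    (hψ'lip : LipschitzWith L' ψ')
    (zp : ℝ → ℝ) (Lp : NNReal) (Mp : ℝ)
    (hzp_bdd : ∀ t ≤ (0:ℝ), |zp t| ≤ Mp)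
    (hzp_lip : LipschitzOnWith Lp zp (Iic 0))
    (v : ℝ → ℝ) (hv : ContDiffOn ℝ 1 v (Icc 0 T))
    (ρ : ℝ → ℝ → ℝ)
    (hρnonneg : ∀ a t, 0 ≤ ρ a t)
    (hρint : ∀ t ∈ Icc (0:ℝ) T, IntegrableOn (fun a => (1 + a ^ 2) * ρ a t) (Ioi 0))
    (hρbdd : ∃ C : ℝ, ∀ t ∈ Icc (0:ℝ) T, ∫ a in Ioi (0:ℝ), (1 + a ^ 2) * ρ a t ≤ C)
    (hρcont : ∀ t₀ ∈ Icc (0:ℝ) T,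
      Tendsto (fun t => ∫ a in Ioi (0:ℝ), (1 + a ^ 2) * |ρ a t - ρ a t₀|)
        (nhdsWithin t₀ (Icc 0 T)) (nhds 0)) :
    ∃ z : ℝ → ℝ,
      ((z 0 = zp 0) ∧
        ContinuousOn z (Icc 0 T) ∧
        ContinuousOn (deriv z) (Icc 0 T) ∧
        (∀ t ∈ Ioc (0:ℝ) T, DifferentiableAt ℝ z t ∧
          deriv z t + ∫ a in Ioi (0:ℝ), ψ' (a * deriv z t) * ρ a t = v t)) ∧
      (∀ t ∈ Ioc (0:ℝ) T, |deriv z t| ≤ |v t|) ∧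
      ∀ z₂ : ℝ → ℝ,
        ((z₂ 0 = zp 0) ∧
          ContinuousOn z₂ (Icc 0 T) ∧
          ContinuousOn (deriv z₂) (Icc 0 T) ∧
          (∀ t ∈ Ioc (0:ℝ) T, DifferentiableAt ℝ z₂ t ∧
            deriv z₂ t + ∫ a in Ioi (0:ℝ), ψ' (a * deriv z₂ t) * ρ a t = v t)) →
        ∀ t ∈ Icc (0:ℝ) T, z₂ t = z t :=
  stmt_3_general T hT ψ ψ' L' hψeven hψconv hψderiv hψ'lip zp v hv ρ hρnonneg hρint hρcont
end

section
/- Explicit long-time limit for the exponential kernel: Let ψ(u) = u²/2, v ≡ 0, and ρ(a) = β exp(−ζ a) with constants β, ζ > 0, and let z_p : (-∞,0] → ℝ be bounded and Lipschitz. Then the solution z of ż(t) + ∫₀^∞ (z(t) − z(t−a)) β e^{−ζ a} da = 0 (t > 0), z(t) = z_p(t) (t ≤ 0), satisfies lim_{t→∞} z(t) = ( ζ² z_p(0) + β ζ ∫_{−∞}^0 e^{ζ τ} z_p(τ) dτ ) / ( ζ² + β ). -/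
open MeasureTheory Set Filter

/-!
For the exponential kernel the memory term `m t = ∫₀^∞ z (t - a) e^{-ζa} da`
equals `e^{-ζt} ∫_{-∞}^t e^{ζτ} z τ dτ`, so `m' = z - ζ m`, and the delay equation closes
into the linear system `z' = β m - (β/ζ) z`. Along it `ζ z + β m` is conserved, hence
`z' = λ (L - z)` with `λ = (ζ² + β)/ζ` and `λ L = ζ z 0 + β m 0`, and `z → L` exponentially.
-/

theorem eq_of_hasDerivAt_zero_of_continuousOn_Ici {f : ℝ → ℝ} {a t : ℝ}
    (hc : ContinuousOn f (Ici a)) (hd : ∀ x > a, HasDerivAt f 0 x) (ht : a ≤ t) :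
    f t = f a := by
  rcases ht.eq_or_lt with rfl | hat
  · rfl
  obtain ⟨c, -, hslope⟩ := exists_hasDerivAt_eq_slope f (fun _ => 0) hat
    (hc.mono Icc_subset_Ici_self) fun x hx => hd x hx.1
  rw [eq_comm, div_eq_zero_iff, sub_eq_zero] at hslope
  exact hslope.resolve_right (sub_ne_zero.2 hat.ne')

theorem tendsto_of_hasDerivAt_eq_mul_sub {f : ℝ → ℝ} {a k L : ℝ} (hk : 0 < k)
    (hc : ContinuousOn f (Ici a)) (hd : ∀ x > a, HasDerivAt f (k * (L - f x)) x) :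
    Tendsto f atTop (nhds L) := by
  set u : ℝ → ℝ := fun t => Real.exp (k * t) * (f t - L)
  have hu : ∀ t ≥ a, u t = u a := by
    refine fun t => eq_of_hasDerivAt_zero_of_continuousOn_Ici (by fun_prop) fun x hx => ?_
    refine (((hasDerivAt_id x).const_mul k).exp.mul ((hd x hx).sub_const L)).congr_deriv ?_
    simp only [id]
    ring
  have hf : ∀ t ≥ a, f t = L + u a * Real.exp (-(k * t)) := fun t ht => by
    rw [← hu t ht, Real.exp_neg]
    field_simp
    ring
  have hexp : Tendsto (fun t => L + u a * Real.exp (-(k * t))) atTop (nhds (L + u a * 0)) :=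
    tendsto_const_nhds.add <| tendsto_const_nhds.mul <|
      Real.tendsto_exp_atBot.comp <| tendsto_neg_atTop_atBot.comp <|
        tendsto_id.const_mul_atTop hk
  rw [mul_zero, add_zero] at hexp
  exact hexp.congr' <| (eventually_ge_atTop a).mono fun t ht => (hf t ht).symm

theorem integral_Ioi_comp_sub_left {E : Type*} [NormedAddCommGroup E] [NormedSpace ℝ E]
    (f : ℝ → E) (t : ℝ) :
    ∫ a in Ioi (0:ℝ), f (t - a) = ∫ x in Iic t, f x := by
  have h := (Measure.measurePreserving_sub_left volume t).setIntegral_preimage_emb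
    (Homeomorph.subLeft t).measurableEmbedding f (Iic t)
  rw [← integral_Ici_eq_integral_Ioi, ← h]
  congr 2
  ext a; simp

theorem hasDerivAt_integral_Iic {E : Type*} [NormedAddCommGroup E] [NormedSpace ℝ E]
    [CompleteSpace E] {f : ℝ → E} (hf : Continuous f)
    (hint : ∀ T, IntegrableOn f (Iic T)) (t : ℝ) :
    HasDerivAt (fun t => ∫ x in Iic t, f x) (f t) t := by
  have h : (fun t => ∫ x in Iic t, f x) = fun t => (∫ x in Iic 0, f x) + ∫ x in (0:ℝ)..t, f x := by
    ext t
    rw [← intervalIntegral.integral_Iic_sub_Iic (hint 0) (hint t), add_sub_cancel]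
  rw [h]
  exact (intervalIntegral.integral_hasDerivAt_right (hf.intervalIntegrable _ _)
    (hf.stronglyMeasurableAtFilter _ _) hf.continuousAt).const_add _

theorem exists_bound_Iic_of_continuous {z : ℝ → ℝ} {a M : ℝ} (hz : Continuous z)
    (hM : ∀ t ≤ a, |z t| ≤ M) (T : ℝ) : ∃ C, ∀ t ≤ T, |z t| ≤ C := by
  obtain ⟨C, hC⟩ := (isCompact_Icc (a := a) (b := T)).exists_bound_of_continuousOn hz.continuousOn
  refine ⟨max M C, fun t htT => ?_⟩
  rcases le_total t a with hta | hat
  · exact (hM t hta).trans (le_max_left _ _)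
  · exact (hC t ⟨hat, htT⟩).trans (le_max_right _ _)

section ExponentialMemory

noncomputable def expMemory (ζ : ℝ) (z : ℝ → ℝ) (t : ℝ) : ℝ :=
  ∫ a in Ioi (0:ℝ), z (t - a) * Real.exp (-ζ * a)

theorem expMemory_eq (ζ : ℝ) (z : ℝ → ℝ) (t : ℝ) :
    expMemory ζ z t = Real.exp (-ζ * t) * ∫ τ in Iic t, Real.exp (ζ * τ) * z τ := by
  rw [← integral_Ioi_comp_sub_left, ← integral_const_mul, expMemory]
  congr 1 with a
  rw [← mul_assoc, ← Real.exp_add]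
  ring_nf

variable {ζ : ℝ} {z : ℝ → ℝ}

theorem integrableOn_exp_mul_mul_Iic (hζ : 0 < ζ) (hz : Continuous z) {T M : ℝ}
    (hM : ∀ t ≤ T, |z t| ≤ M) : IntegrableOn (fun τ => Real.exp (ζ * τ) * z τ) (Iic T) :=
  (integrableOn_exp_mul_Iic hζ T).mul_bdd hz.aestronglyMeasurable <|
    (ae_restrict_iff' measurableSet_Iic).2 <| ae_of_all _ hM

theorem integrableOn_comp_sub_mul_exp_neg (hζ : 0 < ζ) (hz : Continuous z) {t M : ℝ}
    (hM : ∀ τ ≤ t, |z τ| ≤ M) :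
    IntegrableOn (fun a => z (t - a) * Real.exp (-ζ * a)) (Ioi 0) :=
  (integrableOn_exp_mul_Ioi (neg_lt_zero.2 hζ) 0).bdd_mul (by fun_prop) <|
    (ae_restrict_iff' measurableSet_Ioi).2 <| ae_of_all _ fun a ha =>
      hM _ (by linarith [mem_Ioi.1 ha])

theorem hasDerivAt_expMemory (hζ : 0 < ζ) (hz : Continuous z)
    (hbdd : ∀ T, ∃ M, ∀ t ≤ T, |z t| ≤ M) (t : ℝ) :
    HasDerivAt (expMemory ζ z) (z t - ζ * expMemory ζ z t) t := by
  have hint : ∀ T, IntegrableOn (fun τ => Real.exp (ζ * τ) * z τ) (Iic T) := fun T =>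
    (hbdd T).elim fun _ hM => integrableOn_exp_mul_mul_Iic hζ hz hM
  rw [funext (expMemory_eq ζ z)]
  refine (((hasDerivAt_id t).const_mul (-ζ)).exp.mul
    (hasDerivAt_integral_Iic (by fun_prop) hint t)).congr_deriv ?_
  have hexp : Real.exp (-ζ * t) * Real.exp (ζ * t) = 1 := by
    rw [← Real.exp_add]; simp
  simp only [id]
  linear_combination z t * hexp

theorem integral_sub_comp_sub_mul_exp_neg (β : ℝ) (hζ : 0 < ζ) (hz : Continuous z) {t M : ℝ}
    (hM : ∀ τ ≤ t, |z τ| ≤ M) :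
    ∫ a in Ioi (0:ℝ), (z t - z (t - a)) * (β * Real.exp (-ζ * a))
      = β * (z t / ζ - expMemory ζ z t) := by
  have hexp : ∫ a in Ioi (0:ℝ), Real.exp (-ζ * a) = 1 / ζ := by
    rw [integral_exp_mul_Ioi (neg_lt_zero.2 hζ)]; simp
  have hsplit : ∀ a, (z t - z (t - a)) * (β * Real.exp (-ζ * a))
      = β * (z t * Real.exp (-ζ * a) - z (t - a) * Real.exp (-ζ * a)) := fun a => by ring
  simp_rw [hsplit]
  rw [integral_const_mul, integral_sub ((integrableOn_exp_mul_Ioi (neg_lt_zero.2 hζ) 0).const_mul _)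
    (integrableOn_comp_sub_mul_exp_neg hζ hz hM), integral_const_mul, hexp, expMemory]
  ring

end ExponentialMemory

/-- Explicit long-time limit for the exponential kernel `ρ(a) = β e^{−ζa}` in the linear
case `ψ(u) = u²/2` (so `ψ'(u) = u`), `v ≡ 0`, `ε = 1`:
`z(t) → (ζ² z_p(0) + βζ ∫_{−∞}^0 e^{ζτ} z_p(τ) dτ) / (ζ² + β)` as `t → ∞`. -/
theorem stmt_8
    (β ζ : ℝ) (hβ : 0 < β) (hζ : 0 < ζ)
    (zp : ℝ → ℝ) (Lp : NNReal) (Mp : ℝ)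
    (hzp_bdd : ∀ t ≤ (0:ℝ), |zp t| ≤ Mp)
    (hzp_lip : LipschitzOnWith Lp zp (Iic 0))
    (z : ℝ → ℝ)
    (hpast : ∀ t ≤ (0:ℝ), z t = zp t)
    (hzcont : ContinuousOn z (Ici 0))
    (hzdiff : ∀ t > (0:ℝ), DifferentiableAt ℝ z t)
    (heq : ∀ t > (0:ℝ),
      deriv z t
        + ∫ a in Ioi (0:ℝ), (z t - z (t - a)) * (β * Real.exp (-ζ * a)) = 0) :
    Tendsto z atTop (nhds
      ((ζ ^ 2 * zp 0 + β * ζ * ∫ τ in Iic (0:ℝ), Real.exp (ζ * τ) * zp τ) /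
        (ζ ^ 2 + β))) := by
  have hzc : Continuous z := by
    have hpast_cont : ContinuousOn z (Iic 0) := hzp_lip.continuousOn.congr hpast
    simpa [Iic_union_Ici, continuousOn_univ] using
      hpast_cont.union_of_isClosed hzcont isClosed_Iic isClosed_Ici
  have hbdd := exists_bound_Iic_of_continuous hzc fun t ht => hpast t ht ▸ hzp_bdd t ht
  have hm := hasDerivAt_expMemory hζ hzc hbdd
  have hz' : ∀ t > 0, HasDerivAt z (β * expMemory ζ z t - β / ζ * z t) t := fun t ht => by
    obtain ⟨M, hM⟩ := hbdd t
    have h := heq t ht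
    rw [integral_sub_comp_sub_mul_exp_neg β hζ hzc hM] at h
    exact (hzdiff t ht).hasDerivAt.congr_deriv (by linear_combination h)
  have hconserved : ∀ t ≥ 0,
      ζ * z t + β * expMemory ζ z t = ζ * z 0 + β * expMemory ζ z 0 := by
    have hmc : Continuous (expMemory ζ z) := continuous_iff_continuousAt.2 fun t => (hm t).continuousAt
    refine fun t => eq_of_hasDerivAt_zero_of_continuousOn_Ici
      (f := fun t => ζ * z t + β * expMemory ζ z t) (by fun_prop) fun x hx => ?_
    refine (((hz' x hx).const_mul ζ).add ((hm x).const_mul β)).congr_deriv ?_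
    field_simp
    ring
  have hm0 : expMemory ζ z 0 = ∫ τ in Iic (0:ℝ), Real.exp (ζ * τ) * zp τ := by
    rw [expMemory_eq, mul_zero, Real.exp_zero, one_mul]
    exact setIntegral_congr_fun measurableSet_Iic fun τ hτ => by rw [hpast τ hτ]
  refine tendsto_of_hasDerivAt_eq_mul_sub (a := 0) (k := (ζ ^ 2 + β) / ζ) (by positivity)
    hzc.continuousOn fun x hx => (hz' x hx).congr_deriv ?_
  have hx := hconserved x hx.le
  rw [hm0, hpast 0 le_rfl] at hx
  field_simp
  linear_combination ζ * hx
end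

section
/- Existence and uniqueness for the limiting variational inequality: Let ψ : ℝ → ℝ be convex, Lipschitz continuous, and satisfy ψ(0) = 0, let v ∈ ℝ, and let ρ ∈ L¹([0,∞), (1+a)da) be nonnegative. Then the function J(w) := w²/2 − v w + ∫₀^∞ (ψ(a w)/a) ρ(a) da is strictly convex and coercive on ℝ, and consequently there exists a unique γ ∈ ℝ such that for all w ∈ ℝ: (v − γ) w + ∫₀^∞ ψ(a γ) ρ(a) da ≤ ∫₀^∞ ψ(a γ + w) ρ(a) da. -/
open MeasureTheory Set Filter Topology

/-!
The energy is `w²/2 − vw` plus an integral of convex functions of `w`, hence strictly convex,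
and the integral term is at least `−L |w| ∫ρ`, hence the energy is coercive and has a minimiser
`γ`. Comparing the energy at `γ` and `γ + s w`, dividing by `s`, and using the convexity bound
`ψ(x + a s w) − ψ(x) ≤ a s (ψ(x + w) − ψ(x))` (valid for `a s ≤ 1`) gives the variational
inequality as `s → 0⁺`: the weights `a > 1/s` where the bound fails vanish by dominated
convergence. Two solutions `γ₁ < γ₂` are ruled out in the same way, from
`ψ(x + h) + ψ(y − h) ≤ ψ(x) + ψ(y)` for `0 ≤ h ≤ y − x`, applied with `x = aγ₁`, `y = aγ₂`.
-/

lemma ConvexOn.map_add_mul_sub_le {f : ℝ → ℝ} (hf : ConvexOn ℝ univ f) (x h : ℝ) {θ : ℝ}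
    (hθ₀ : 0 ≤ θ) (hθ₁ : θ ≤ 1) : f (x + θ * h) - f x ≤ θ * (f (x + h) - f x) := by
  have hθ := hf.2 (mem_univ x) (mem_univ (x + h)) (sub_nonneg.2 hθ₁) hθ₀ (sub_add_cancel 1 θ)
  rw [smul_eq_mul, smul_eq_mul, smul_eq_mul, smul_eq_mul,
    show (1 - θ) * x + θ * (x + h) = x + θ * h by ring] at hθ
  linarith

lemma ConvexOn.map_add_add_map_sub_le {f : ℝ → ℝ} (hf : ConvexOn ℝ univ f) {x y h : ℝ}
    (hh : 0 ≤ h) (hhxy : h ≤ y - x) : f (x + h) + f (y - h) ≤ f x + f y := by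
  rcases hhxy.eq_or_lt with hxy | hxy
  · rw [hxy, add_sub_cancel, sub_sub_cancel, add_comm]
  have hpos : 0 < y - x := hh.trans_lt hxy
  set θ := h / (y - x)
  have hθ₀ : 0 ≤ θ := div_nonneg hh hpos.le
  have hθ₁ : θ ≤ 1 := (div_le_one hpos).2 hxy.le
  have hx := hf.map_add_mul_sub_le x (y - x) hθ₀ hθ₁
  have hy := hf.map_add_mul_sub_le y (x - y) hθ₀ hθ₁
  have hθh : θ * (y - x) = h := div_mul_cancel₀ h hpos.ne'
  rw [hθh, add_sub_cancel] at hx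
  rw [show θ * (x - y) = -h by linarith, add_sub_cancel, ← sub_eq_add_neg] at hy
  linarith

lemma LipschitzWith.abs_map_add_sub_le {f : ℝ → ℝ} {L : NNReal} (hf : LipschitzWith L f)
    (x h : ℝ) : |f (x + h) - f x| ≤ L * |h| := by
  simpa [Real.dist_eq] using hf.dist_le_mul (x + h) x

lemma LipschitzWith.abs_map_add_mul_sub_div_le {f : ℝ → ℝ} {L : NNReal} (hf : LipschitzWith L f)
    (x w : ℝ) {t : ℝ} (ht : 0 < t) : |(f (x + t * w) - f x) / t| ≤ L * |w| := by
  rw [abs_div, abs_of_pos ht, div_le_iff₀ ht]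
  have h := hf.abs_map_add_sub_le x (t * w)
  rw [abs_mul, abs_of_pos ht] at h
  linarith

lemma LipschitzWith.abs_map_mul_div_le {f : ℝ → ℝ} {L : NNReal} (hf : LipschitzWith L f)
    (hf₀ : f 0 = 0) {a : ℝ} (ha : 0 < a) (w : ℝ) : |f (a * w) / a| ≤ L * |w| := by
  simpa [hf₀] using hf.abs_map_add_mul_sub_div_le 0 w ha

lemma strictConvexOn_sq_div_two_sub_mul (v : ℝ) :
    StrictConvexOn ℝ univ fun w : ℝ => w ^ 2 / 2 - v * w := by
  refine ⟨convex_univ, fun x _ y _ hxy p q hp hq hpq => ?_⟩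
  have hsq : 0 < (x - y) ^ 2 := pow_pos (abs_pos.2 (sub_ne_zero.2 hxy)) 2 |>.trans_eq (sq_abs _)
  simp only [smul_eq_mul]
  nlinarith [mul_pos (mul_pos hp hq) hsq]

lemma ConvexOn.map_mul_div_mul {f : ℝ → ℝ} (hf : ConvexOn ℝ univ f) {a : ℝ} (ha : 0 < a)
    {r : ℝ} (hr : 0 ≤ r) : ConvexOn ℝ univ fun w => f (a * w) / a * r := by
  refine ⟨convex_univ, fun x _ y _ p q hp hq hpq => ?_⟩
  have h := hf.2 (mem_univ (a * x)) (mem_univ (a * y)) hp hq hpq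
  simp only [smul_eq_mul] at h ⊢
  rw [show a * (p * x + q * y) = p * (a * x) + q * (a * y) by ring]
  convert mul_le_mul_of_nonneg_left h (div_nonneg hr ha.le) using 1 <;> ring

lemma ConvexOn.integral {α : Type*} [MeasurableSpace α] {μ : Measure α} {f : ℝ → α → ℝ}
    (hf : ∀ᵐ a ∂μ, ConvexOn ℝ univ fun w => f w a) (hfi : ∀ w, Integrable (f w) μ) :
    ConvexOn ℝ univ fun w => ∫ a, f w a ∂μ := by
  refine ⟨convex_univ, fun x _ y _ p q hp hq hpq => ?_⟩
  simp only [smul_eq_mul]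
  rw [← integral_const_mul, ← integral_const_mul, ← integral_add ((hfi x).const_mul p)
    ((hfi y).const_mul q)]
  refine integral_mono_ae (hfi _) (((hfi x).const_mul p).add ((hfi y).const_mul q)) ?_
  filter_upwards [hf] with a ha
  simpa only [smul_eq_mul] using ha.2 (mem_univ x) (mem_univ y) hp hq hpq

lemma nonpos_of_tendsto_of_le_integral {α ι : Type*} [MeasurableSpace α] {μ : Measure α}
    {l : Filter ι} [l.NeBot] [l.IsCountablyGenerated] {F : ι → α → ℝ} {g : α → ℝ}
    {c : ι → ℝ} {c₀ : ℝ} (hFm : ∀ᶠ i in l, AEStronglyMeasurable (F i) μ) (hg : Integrable g μ)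
    (hFg : ∀ᶠ i in l, ∀ᵐ a ∂μ, |F i a| ≤ g a) (hF : ∀ᵐ a ∂μ, ∀ᶠ i in l, F i a ≤ 0)
    (hc : Tendsto c l (𝓝 c₀)) (hcF : ∀ᶠ i in l, c i ≤ ∫ a, F i a ∂μ) : c₀ ≤ 0 := by
  have hpos : Tendsto (fun i => ∫ a, max (F i a) 0 ∂μ) l (𝓝 0) := by
    have h := tendsto_integral_filter_of_dominated_convergence (μ := μ)
      (F := fun i a => max (F i a) 0) (f := fun _ => 0) g
      (hFm.mono fun i hi => hi.sup aestronglyMeasurable_const) ?_ hg ?_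
    · simpa using h
    · filter_upwards [hFg] with i hi
      filter_upwards [hi] with a ha
      rw [Real.norm_eq_abs, abs_of_nonneg (le_max_right _ _)]
      exact max_le ((le_abs_self _).trans ha) ((abs_nonneg _).trans ha)
    · filter_upwards [hF] with a ha
      exact tendsto_const_nhds.congr' (ha.mono fun i hi => (max_eq_right hi).symm)
  refine le_of_tendsto_of_tendsto hc hpos ?_
  filter_upwards [hcF, hFm, hFg] with i hci hm hb
  have hi : Integrable (F i) μ := hg.mono' hm (by simpa only [Real.norm_eq_abs] using hb)
  exact hci.trans (integral_mono hi hi.pos_part fun a => le_max_left _ _)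

noncomputable def energy (ψ : ℝ → ℝ) (v : ℝ) (ρ : ℝ → ℝ) (w : ℝ) : ℝ :=
  w ^ 2 / 2 - v * w + ∫ a in Ioi (0 : ℝ), ψ (a * w) / a * ρ a

def IsVariationalSolution (ψ : ℝ → ℝ) (v : ℝ) (ρ : ℝ → ℝ) (γ : ℝ) : Prop :=
  ∀ w : ℝ, (v - γ) * w + ∫ a in Ioi (0 : ℝ), ψ (a * γ) * ρ a ≤
    ∫ a in Ioi (0 : ℝ), ψ (a * γ + w) * ρ a

section

variable {ψ ρ : ℝ → ℝ} {L : NNReal} {v : ℝ}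

lemma aestronglyMeasurable_of_integrableOn_one_add_mul
    (hρ : IntegrableOn (fun a => (1 + a) * ρ a) (Ioi 0)) :
    AEStronglyMeasurable ρ (volume.restrict (Ioi 0)) := by
  have hinv : ContinuousOn (fun a : ℝ => (1 + a)⁻¹) (Ioi 0) :=
    (continuous_const.add continuous_id).continuousOn.inv₀ fun a (ha : 0 < a) =>
      (add_pos one_pos ha).ne'
  refine ((hinv.aestronglyMeasurable measurableSet_Ioi).mul hρ.aestronglyMeasurable).congr ?_
  filter_upwards [ae_restrict_mem measurableSet_Ioi] with a (ha : 0 < a)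
  simp only [Pi.mul_apply]
  field_simp

lemma integrableOn_mul_of_abs_le_mul_one_add (hρ₀ : ∀ a, 0 ≤ ρ a)
    (hρ : IntegrableOn (fun a => (1 + a) * ρ a) (Ioi 0)) {g : ℝ → ℝ} {C : ℝ}
    (hg : AEStronglyMeasurable g (volume.restrict (Ioi 0)))
    (hgC : ∀ a ∈ Ioi (0 : ℝ), |g a| ≤ C * (1 + a)) :
    IntegrableOn (fun a => g a * ρ a) (Ioi 0) := by
  refine (hρ.const_mul C).mono' (hg.mul (aestronglyMeasurable_of_integrableOn_one_add_mul hρ)) ?_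
  filter_upwards [ae_restrict_mem measurableSet_Ioi] with a ha
  rw [Real.norm_eq_abs, abs_mul, abs_of_nonneg (hρ₀ a), ← mul_assoc]
  exact mul_le_mul_of_nonneg_right (hgC a ha) (hρ₀ a)

lemma integrableOn_of_integrableOn_one_add_mul (hρ₀ : ∀ a, 0 ≤ ρ a)
    (hρ : IntegrableOn (fun a => (1 + a) * ρ a) (Ioi 0)) : IntegrableOn ρ (Ioi 0) := by
  simpa using integrableOn_mul_of_abs_le_mul_one_add hρ₀ hρ (g := fun _ => 1) (C := 1)
    aestronglyMeasurable_const fun a (ha : 0 < a) => by simp; linarith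

lemma integrableOn_map_mul_add_mul (hψ : LipschitzWith L ψ) (hρ₀ : ∀ a, 0 ≤ ρ a)
    (hρ : IntegrableOn (fun a => (1 + a) * ρ a) (Ioi 0)) (γ w : ℝ) :
    IntegrableOn (fun a => ψ (a * γ + w) * ρ a) (Ioi 0) := by
  refine integrableOn_mul_of_abs_le_mul_one_add hρ₀ hρ (C := |ψ 0| + L * (|γ| + |w|))
    (hψ.continuous.comp (by fun_prop)).aestronglyMeasurable fun a (ha : 0 < a) => ?_
  have h := hψ.abs_map_add_sub_le 0 (a * γ + w)
  rw [zero_add] at h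
  have hγw : |a * γ + w| ≤ (1 + a) * (|γ| + |w|) := by
    calc |a * γ + w| ≤ a * |γ| + |w| := by
          simpa [abs_mul, abs_of_pos ha] using abs_add_le (a * γ) w
      _ ≤ (1 + a) * (|γ| + |w|) := by nlinarith [abs_nonneg γ, abs_nonneg w]
  calc |ψ (a * γ + w)| ≤ |ψ 0| + L * |a * γ + w| := by
        linarith [abs_sub_abs_le_abs_sub (ψ (a * γ + w)) (ψ 0)]
    _ ≤ |ψ 0| + L * ((1 + a) * (|γ| + |w|)) := by gcongr
    _ ≤ (|ψ 0| + L * (|γ| + |w|)) * (1 + a) := by nlinarith [abs_nonneg (ψ 0)]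

lemma integrableOn_map_add_sub_mul (hψ : LipschitzWith L ψ) (hρ₀ : ∀ a, 0 ≤ ρ a)
    (hρ : IntegrableOn (fun a => (1 + a) * ρ a) (Ioi 0)) (γ w : ℝ) :
    IntegrableOn (fun a => (ψ (a * γ + w) - ψ (a * γ)) * ρ a) (Ioi 0) := by
  simpa [sub_mul, Pi.sub_def] using (integrableOn_map_mul_add_mul hψ hρ₀ hρ γ w).sub
    (integrableOn_map_mul_add_mul hψ hρ₀ hρ γ 0)

lemma integrableOn_map_mul_div_mul (hψ : LipschitzWith L ψ) (hψ₀ : ψ 0 = 0)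
    (hρ₀ : ∀ a, 0 ≤ ρ a) (hρ : IntegrableOn (fun a => (1 + a) * ρ a) (Ioi 0)) (w : ℝ) :
    IntegrableOn (fun a => ψ (a * w) / a * ρ a) (Ioi 0) := by
  refine integrableOn_mul_of_abs_le_mul_one_add hρ₀ hρ (C := L * |w|) ?_
    fun a (ha : 0 < a) => (hψ.abs_map_mul_div_le hψ₀ ha w).trans (le_mul_of_one_le_right
      (by positivity) (by linarith))
  exact (hψ.continuous.measurable.comp (measurable_id.mul_const w)).div measurable_id
    |>.aestronglyMeasurable

lemma strictConvexOn_energy (hψc : ConvexOn ℝ univ ψ) (hψ : LipschitzWith L ψ) (hψ₀ : ψ 0 = 0)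
    (hρ₀ : ∀ a, 0 ≤ ρ a) (hρ : IntegrableOn (fun a => (1 + a) * ρ a) (Ioi 0)) :
    StrictConvexOn ℝ univ (energy ψ v ρ) := by
  refine (strictConvexOn_sq_div_two_sub_mul v).add_convexOn (ConvexOn.integral ?_
    (integrableOn_map_mul_div_mul hψ hψ₀ hρ₀ hρ))
  filter_upwards [ae_restrict_mem measurableSet_Ioi] with a ha
  exact hψc.map_mul_div_mul ha (hρ₀ a)

lemma neg_mul_abs_le_integral_map_mul_div_mul (hψ : LipschitzWith L ψ) (hψ₀ : ψ 0 = 0)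
    (hρ₀ : ∀ a, 0 ≤ ρ a) (hρ : IntegrableOn (fun a => (1 + a) * ρ a) (Ioi 0)) (w : ℝ) :
    -(L * |w| * ∫ a in Ioi (0 : ℝ), ρ a) ≤ ∫ a in Ioi (0 : ℝ), ψ (a * w) / a * ρ a := by
  rw [← neg_mul, ← integral_const_mul]
  refine setIntegral_mono_on ((integrableOn_of_integrableOn_one_add_mul hρ₀ hρ).const_mul _)
    (integrableOn_map_mul_div_mul hψ hψ₀ hρ₀ hρ w) measurableSet_Ioi fun a ha => ?_
  exact mul_le_mul_of_nonneg_right (neg_le_of_abs_le (hψ.abs_map_mul_div_le hψ₀ ha w)) (hρ₀ a)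

lemma tendsto_energy_cocompact (hψ : LipschitzWith L ψ) (hψ₀ : ψ 0 = 0)
    (hρ₀ : ∀ a, 0 ≤ ρ a) (hρ : IntegrableOn (fun a => (1 + a) * ρ a) (Ioi 0)) :
    Tendsto (energy ψ v ρ) (cocompact ℝ) atTop := by
  set C := |v| + L * ∫ a in Ioi (0 : ℝ), ρ a
  have hquad : Tendsto (fun r : ℝ => r * (r / 2 - C)) atTop atTop :=
    tendsto_id.atTop_mul_atTop₀ (tendsto_atTop_add_const_right _ _
      (tendsto_id.atTop_div_const two_pos))
  refine tendsto_atTop_mono (fun w => ?_) (hquad.comp (tendsto_norm_cocompact_atTop (E := ℝ)))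
  have hK := neg_mul_abs_le_integral_map_mul_div_mul hψ hψ₀ hρ₀ hρ w
  have hvw : v * w ≤ |v| * |w| := (le_abs_self _).trans_eq (abs_mul v w)
  simp only [Function.comp_apply, Real.norm_eq_abs, energy]
  nlinarith [sq_abs w]

lemma isVariationalSolution_iff (hψ : LipschitzWith L ψ) (hρ₀ : ∀ a, 0 ≤ ρ a)
    (hρ : IntegrableOn (fun a => (1 + a) * ρ a) (Ioi 0)) {γ : ℝ} :
    IsVariationalSolution ψ v ρ γ ↔
      ∀ w, (v - γ) * w ≤ ∫ a in Ioi (0 : ℝ), (ψ (a * γ + w) - ψ (a * γ)) * ρ a := by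
  refine forall_congr' fun w => ?_
  have h := integral_sub (integrableOn_map_mul_add_mul hψ hρ₀ hρ γ w)
    (integrableOn_map_mul_add_mul hψ hρ₀ hρ γ 0)
  simp only [add_zero, ← sub_mul] at h
  rw [h]
  constructor <;> intro <;> linarith

lemma mul_sub_le_integral_of_forall_energy_le (hψ : LipschitzWith L ψ) (hψ₀ : ψ 0 = 0)
    (hρ₀ : ∀ a, 0 ≤ ρ a) (hρ : IntegrableOn (fun a => (1 + a) * ρ a) (Ioi 0)) {γ : ℝ}
    (hγ : ∀ w, energy ψ v ρ γ ≤ energy ψ v ρ w) (w : ℝ) {s : ℝ} (hs : 0 < s) :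
    (v - γ) * w - s * w ^ 2 / 2 ≤
      ∫ a in Ioi (0 : ℝ), (ψ (a * γ + a * s * w) - ψ (a * γ)) / (a * s) * ρ a := by
  have hK : (∫ a in Ioi (0 : ℝ), ψ (a * (γ + s * w)) / a * ρ a) -
      ∫ a in Ioi (0 : ℝ), ψ (a * γ) / a * ρ a =
        s * ∫ a in Ioi (0 : ℝ), (ψ (a * γ + a * s * w) - ψ (a * γ)) / (a * s) * ρ a := by
    rw [← integral_sub (integrableOn_map_mul_div_mul hψ hψ₀ hρ₀ hρ _)
      (integrableOn_map_mul_div_mul hψ hψ₀ hρ₀ hρ γ), ← integral_const_mul]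
    refine setIntegral_congr_fun measurableSet_Ioi fun a (ha : 0 < a) => ?_
    rw [mul_add, ← mul_assoc]
    field_simp
  have hmin := hγ (γ + s * w)
  simp only [energy] at hmin
  refine le_of_mul_le_mul_left ?_ hs
  linarith

lemma isVariationalSolution_of_forall_energy_le (hψc : ConvexOn ℝ univ ψ)
    (hψ : LipschitzWith L ψ) (hψ₀ : ψ 0 = 0) (hρ₀ : ∀ a, 0 ≤ ρ a)
    (hρ : IntegrableOn (fun a => (1 + a) * ρ a) (Ioi 0)) {γ : ℝ}
    (hγ : ∀ w, energy ψ v ρ γ ≤ energy ψ v ρ w) : IsVariationalSolution ψ v ρ γ := by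
  refine (isVariationalSolution_iff hψ hρ₀ hρ).2 fun w => ?_
  set D := ∫ a in Ioi (0 : ℝ), (ψ (a * γ + w) - ψ (a * γ)) * ρ a
  set F : ℝ → ℝ → ℝ := fun s a =>
    ((ψ (a * γ + a * s * w) - ψ (a * γ)) / (a * s) - (ψ (a * γ + w) - ψ (a * γ))) * ρ a
  have hψm := hψ.continuous.measurable
  have hle : ∀ s > 0, (v - γ) * w - s * w ^ 2 / 2 - D ≤ ∫ a in Ioi (0 : ℝ), F s a := by
    intro s hs
    have hI : IntegrableOn (fun a => (ψ (a * γ + a * s * w) - ψ (a * γ)) / (a * s) * ρ a)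
        (Ioi 0) :=
      integrableOn_mul_of_abs_le_mul_one_add hρ₀ hρ (C := L * |w|)
        (by fun_prop : Measurable _).aestronglyMeasurable fun a (ha : 0 < a) =>
          (hψ.abs_map_add_mul_sub_div_le _ w (mul_pos ha hs)).trans
            (le_mul_of_one_le_right (by positivity) (by linarith))
    have hF : ∫ a in Ioi (0 : ℝ), F s a =
        (∫ a in Ioi (0 : ℝ), (ψ (a * γ + a * s * w) - ψ (a * γ)) / (a * s) * ρ a) - D := by
      rw [← integral_sub hI (integrableOn_map_add_sub_mul hψ hρ₀ hρ γ w)]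
      simp only [F, sub_mul]
    rw [hF]
    exact sub_le_sub_right (mul_sub_le_integral_of_forall_energy_le hψ hψ₀ hρ₀ hρ hγ w hs) D
  suffices (v - γ) * w - D ≤ 0 by linarith
  refine nonpos_of_tendsto_of_le_integral (l := 𝓝[>] 0) (F := F)
    (g := fun a => 2 * L * |w| * ρ a) ?_ ?_ ?_ ?_ ?_ (eventually_nhdsWithin_of_forall hle)
  · exact Eventually.of_forall fun _ => (by fun_prop : Measurable _).aestronglyMeasurable.mul
      (aestronglyMeasurable_of_integrableOn_one_add_mul hρ)
  · exact (integrableOn_of_integrableOn_one_add_mul hρ₀ hρ).const_mul _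
  · filter_upwards [self_mem_nhdsWithin] with s (hs : 0 < s)
    filter_upwards [ae_restrict_mem measurableSet_Ioi] with a (ha : 0 < a)
    rw [abs_mul, abs_of_nonneg (hρ₀ a)]
    refine mul_le_mul_of_nonneg_right ((abs_sub _ _).trans ?_) (hρ₀ a)
    linarith [hψ.abs_map_add_mul_sub_div_le (a * γ) w (mul_pos ha hs),
      hψ.abs_map_add_sub_le (a * γ) w]
  · filter_upwards [ae_restrict_mem measurableSet_Ioi] with a (ha : 0 < a)
    have hsmall : ∀ᶠ s in 𝓝[>] (0 : ℝ), a * s ≤ 1 :=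
      (((continuous_const_mul a).tendsto' 0 0 (mul_zero a)).eventually
        (eventually_le_nhds one_pos)).filter_mono nhdsWithin_le_nhds
    filter_upwards [self_mem_nhdsWithin, hsmall] with s (hs : 0 < s) has
    have hconv := hψc.map_add_mul_sub_le (a * γ) w (mul_pos ha hs).le has
    refine mul_nonpos_of_nonpos_of_nonneg (sub_nonpos.2 ?_) (hρ₀ a)
    rw [div_le_iff₀ (mul_pos ha hs)]
    linarith
  · have h : Continuous fun s : ℝ => (v - γ) * w - s * w ^ 2 / 2 - D := by fun_prop
    simpa using (h.tendsto 0).mono_left nhdsWithin_le_nhds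

lemma IsVariationalSolution.sub_le_integral (hψ : LipschitzWith L ψ) (hρ₀ : ∀ a, 0 ≤ ρ a)
    (hρ : IntegrableOn (fun a => (1 + a) * ρ a) (Ioi 0)) {γ₁ γ₂ : ℝ}
    (h₁ : IsVariationalSolution ψ v ρ γ₁) (h₂ : IsVariationalSolution ψ v ρ γ₂) {h : ℝ}
    (hh : 0 < h) : γ₂ - γ₁ ≤ ∫ a in Ioi (0 : ℝ),
      (ψ (a * γ₁ + h) - ψ (a * γ₁) + (ψ (a * γ₂ - h) - ψ (a * γ₂))) / h * ρ a := by
  have hv₁ := (isVariationalSolution_iff hψ hρ₀ hρ).1 h₁ h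
  have hv₂ := (isVariationalSolution_iff hψ hρ₀ hρ).1 h₂ (-h)
  simp only [← sub_eq_add_neg] at hv₂
  have hi₂ : IntegrableOn (fun a => (ψ (a * γ₂ - h) - ψ (a * γ₂)) * ρ a) (Ioi 0) := by
    simpa only [← sub_eq_add_neg] using integrableOn_map_add_sub_mul hψ hρ₀ hρ γ₂ (-h)
  have hsum : ∫ a in Ioi (0 : ℝ),
      (ψ (a * γ₁ + h) - ψ (a * γ₁) + (ψ (a * γ₂ - h) - ψ (a * γ₂))) / h * ρ a =
        ((∫ a in Ioi (0 : ℝ), (ψ (a * γ₁ + h) - ψ (a * γ₁)) * ρ a) +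
          ∫ a in Ioi (0 : ℝ), (ψ (a * γ₂ - h) - ψ (a * γ₂)) * ρ a) / h := by
    rw [← integral_add (integrableOn_map_add_sub_mul hψ hρ₀ hρ γ₁ h) hi₂, ← integral_div]
    congr 1 with a
    ring
  rw [hsum, le_div_iff₀ hh]
  linarith

lemma IsVariationalSolution.eq (hψc : ConvexOn ℝ univ ψ) (hψ : LipschitzWith L ψ)
    (hρ₀ : ∀ a, 0 ≤ ρ a) (hρ : IntegrableOn (fun a => (1 + a) * ρ a) (Ioi 0)) {γ₁ γ₂ : ℝ}
    (h₁ : IsVariationalSolution ψ v ρ γ₁) (h₂ : IsVariationalSolution ψ v ρ γ₂) : γ₁ = γ₂ := by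
  wlog hlt : γ₁ < γ₂ generalizing γ₁ γ₂
  · rcases (not_lt.1 hlt).eq_or_lt with heq | hgt
    · exact heq.symm
    · exact (this h₂ h₁ hgt).symm
  exfalso
  have hψm := hψ.continuous.measurable
  set F : ℝ → ℝ → ℝ := fun h a =>
    (ψ (a * γ₁ + h) - ψ (a * γ₁) + (ψ (a * γ₂ - h) - ψ (a * γ₂))) / h * ρ a
  have hlim := nonpos_of_tendsto_of_le_integral (l := 𝓝[>] 0) (F := F)
    (g := fun a => 2 * L * ρ a) ?_ ?_ ?_ ?_ tendsto_const_nhds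
    (eventually_nhdsWithin_of_forall fun h hh => h₁.sub_le_integral hψ hρ₀ hρ h₂ hh)
  · linarith
  · exact Eventually.of_forall fun _ =>
      (by fun_prop : Measurable _).aestronglyMeasurable.mul
        (aestronglyMeasurable_of_integrableOn_one_add_mul hρ)
  · exact (integrableOn_of_integrableOn_one_add_mul hρ₀ hρ).const_mul _
  · filter_upwards [self_mem_nhdsWithin] with h (hh : 0 < h)
    filter_upwards [ae_restrict_mem measurableSet_Ioi] with a (ha : 0 < a)
    rw [abs_mul, abs_of_nonneg (hρ₀ a), abs_div, abs_of_pos hh]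
    refine mul_le_mul_of_nonneg_right ((div_le_iff₀ hh).2 ((abs_add_le _ _).trans ?_)) (hρ₀ a)
    have hA := hψ.abs_map_add_sub_le (a * γ₁) h
    have hB := hψ.abs_map_add_sub_le (a * γ₂) (-h)
    rw [← sub_eq_add_neg, abs_neg, abs_of_pos hh] at hB
    rw [abs_of_pos hh] at hA
    linarith
  · filter_upwards [ae_restrict_mem measurableSet_Ioi] with a (ha : 0 < a)
    have hgap : 0 < a * γ₂ - a * γ₁ := by nlinarith
    filter_upwards [self_mem_nhdsWithin, Ioo_mem_nhdsGT hgap] with h (hh : 0 < h) hh'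
    have hconv := hψc.map_add_add_map_sub_le hh.le hh'.2.le
    exact mul_nonpos_of_nonpos_of_nonneg (div_nonpos_of_nonpos_of_nonneg (by linarith) hh.le)
      (hρ₀ a)

lemma existsUnique_isVariationalSolution (hψc : ConvexOn ℝ univ ψ) (hψ : LipschitzWith L ψ)
    (hψ₀ : ψ 0 = 0) (hρ₀ : ∀ a, 0 ≤ ρ a) (hρ : IntegrableOn (fun a => (1 + a) * ρ a) (Ioi 0)) :
    ∃! γ, IsVariationalSolution ψ v ρ γ := by
  have hcont : Continuous (energy ψ v ρ) := continuousOn_univ.1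
    ((strictConvexOn_energy hψc hψ hψ₀ hρ₀ hρ).convexOn.continuousOn isOpen_univ)
  obtain ⟨γ, hγ⟩ := hcont.exists_forall_le (tendsto_energy_cocompact hψ hψ₀ hρ₀ hρ)
  exact ⟨γ, isVariationalSolution_of_forall_energy_le hψc hψ hψ₀ hρ₀ hρ hγ,
    fun γ' hγ' => hγ'.eq hψc hψ hρ₀ hρ
      (isVariationalSolution_of_forall_energy_le hψc hψ hψ₀ hρ₀ hρ hγ)⟩

end

/-- Existence and uniqueness for the limiting variational inequality: the functional
`J(w) = w²/2 − vw + ∫₀^∞ (ψ(aw)/a) ρ(a) da` is strictly convex and coercive, and there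
is a unique `γ` with `(v − γ)w + ∫ψ(aγ)ρ ≤ ∫ψ(aγ + w)ρ` for all `w`. -/
theorem stmt_12
    (ψ : ℝ → ℝ) (L : NNReal)
    (hψconv : ConvexOn ℝ Set.univ ψ)
    (hψlip : LipschitzWith L ψ)
    (hψ0 : ψ 0 = 0)
    (v : ℝ)
    (ρ : ℝ → ℝ)
    (hρnonneg : ∀ a, 0 ≤ ρ a)
    (hρint : IntegrableOn (fun a => (1 + a) * ρ a) (Ioi 0)) :
    StrictConvexOn ℝ Set.univ
      (fun w : ℝ => w ^ 2 / 2 - v * w + ∫ a in Ioi (0:ℝ), (ψ (a * w) / a) * ρ a) ∧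
    Tendsto (fun w : ℝ => w ^ 2 / 2 - v * w + ∫ a in Ioi (0:ℝ), (ψ (a * w) / a) * ρ a)
      (Filter.cocompact ℝ) Filter.atTop ∧
    ∃! γ : ℝ, ∀ w : ℝ,
      (v - γ) * w + ∫ a in Ioi (0:ℝ), ψ (a * γ) * ρ a
        ≤ ∫ a in Ioi (0:ℝ), ψ (a * γ + w) * ρ a :=
  ⟨strictConvexOn_energy hψconv hψlip hψ0 hρnonneg hρint,
    tendsto_energy_cocompact hψlip hψ0 hρnonneg hρint,
    existsUnique_isVariationalSolution hψconv hψlip hψ0 hρnonneg hρint⟩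
end

section
/- Velocity-force characterization for the constant-force potential ψ(u) = |u|: Let ρ_∞ ∈ L¹([0,∞)) be nonnegative and set μ_∞ := ∫₀^∞ ρ_∞(a) da, and let v_∞ ∈ ℝ. Suppose γ ∈ ℝ satisfies, for all w ∈ ℝ, the variational inequality (v_∞ − γ)w + ∫₀^∞ |a γ| ρ_∞(a) da ≤ ∫₀^∞ |w + a γ| ρ_∞(a) da. Then: (i) if γ > 0 then v_∞ = γ + μ_∞; (ii) if γ < 0 then v_∞ = γ − μ_∞; (iii) if γ = 0 then v_∞ ∈ [−μ_∞, μ_∞]. Conversely, (iv) if v_∞ ∈ [−μ_∞, μ_∞] then γ = 0 is the unique solution of the variational inequality. -/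
open MeasureTheory Set Filter

/-!
For `γ ≠ 0` the function `F w = ∫₀^∞ |w + a γ| ρ(a) da` is differentiable at `0` with
`F' 0 = sign γ · μ_∞` (differentiate under the integral sign; the integrand is `|ρ(a)|`-Lipschitz
in `w`), and the variational inequality says exactly that `v_∞ - γ` is a subgradient of `F` at `0`,
so `v_∞ - γ = sign γ · μ_∞`. For `γ = 0` we have `F w = |w| μ_∞`, whose subgradients at `0` are
the points of `[-μ_∞, μ_∞]`.
-/

/-- The limiting variational inequality for `ψ(u) = |u|`. -/
def AbsVI (ρinf : ℝ → ℝ) (vinf γ : ℝ) : Prop :=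
  ∀ w : ℝ,
    (vinf - γ) * w + ∫ a in Set.Ioi (0:ℝ), |a * γ| * ρinf a
      ≤ ∫ a in Set.Ioi (0:ℝ), |w + a * γ| * ρinf a

section

variable {ν : Measure ℝ} {ρ : ℝ → ℝ}

theorem integrable_abs_mul_mul (hρ : Integrable ρ ν) (hρ₁ : Integrable (fun a => a * ρ a) ν)
    (γ : ℝ) :
    Integrable (fun a => |a * γ| * ρ a) ν := by
  refine (hρ₁.norm.const_mul |γ|).mono' ?_ (Eventually.of_forall fun a => ?_)
  · exact (continuous_id.mul continuous_const).abs.aestronglyMeasurable.mul hρ.aestronglyMeasurable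
  · simp only [norm_mul, Real.norm_eq_abs, abs_abs, abs_mul]
    exact le_of_eq (by ring)

theorem lipschitzWith_abs_add_const_mul_const (c r : ℝ) :
    LipschitzWith (Real.nnabs r) (fun w => |w + c| * r) :=
  LipschitzWith.of_dist_le_mul fun x y => by
    rw [Real.dist_eq, Real.dist_eq, ← sub_mul, abs_mul, Real.coe_nnabs, mul_comm]
    exact mul_le_mul_of_nonneg_left
      (by simpa using abs_abs_sub_abs_le_abs_sub (x + c) (y + c)) (abs_nonneg r)

theorem hasDerivAt_integral_abs_add_mul_mul (hpos : ∀ᵐ a ∂ν, 0 < a) (hρ : Integrable ρ ν)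
    (hρ₁ : Integrable (fun a => a * ρ a) ν) {γ : ℝ} (hγ : γ ≠ 0) :
    HasDerivAt (fun w => ∫ a, |w + a * γ| * ρ a ∂ν) (SignType.sign γ * ∫ a, ρ a ∂ν) 0 := by
  rw [← integral_const_mul]
  refine (hasDerivAt_integral_of_dominated_loc_of_lip (bound := ρ) univ_mem
    (Eventually.of_forall fun w => ?_) (by simpa using integrable_abs_mul_mul hρ hρ₁ γ)
    (hρ.aestronglyMeasurable.const_mul _)
    (Eventually.of_forall fun _ => (lipschitzWith_abs_add_const_mul_const _ _).lipschitzOnWith)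
    hρ ?_).2
  · exact (continuous_const.add (continuous_id.mul continuous_const)).abs.aestronglyMeasurable.mul
      hρ.aestronglyMeasurable
  · filter_upwards [hpos] with a ha
    have hsign : SignType.sign (a * γ) = SignType.sign γ := by
      rw [sign_mul, sign_pos ha, one_mul]
    have habs : HasDerivAt (|·|) (SignType.sign (a * γ) : ℝ) (0 + a * γ) := by
      rw [zero_add]; exact hasDerivAt_abs (mul_ne_zero ha.ne' hγ)
    have := (habs.comp_add_const 0 (a * γ)).mul_const (ρ a)
    simpa [hsign] using this

end

theorem AbsVI.sub_eq_sign_mul {ρinf : ℝ → ℝ} {vinf γ : ℝ} (h : AbsVI ρinf vinf γ)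
    (hρint : IntegrableOn ρinf (Ioi 0)) (hρint2 : IntegrableOn (fun a => a * ρinf a) (Ioi 0))
    (hγ : γ ≠ 0) : vinf - γ = SignType.sign γ * ∫ a in Ioi (0:ℝ), ρinf a := by
  set F := fun w => ∫ a in Ioi (0:ℝ), |w + a * γ| * ρinf a
  have hmin : IsLocalMin (fun w => F w - (vinf - γ) * w) 0 := by
    refine IsMinOn.isLocalMin (fun w _ => ?_) univ_mem
    show F 0 - (vinf - γ) * 0 ≤ F w - (vinf - γ) * w
    simp only [F, zero_add, mul_zero, sub_zero]
    linarith [h w]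
  have hF : HasDerivAt F (SignType.sign γ * ∫ a in Ioi (0:ℝ), ρinf a) 0 :=
    hasDerivAt_integral_abs_add_mul_mul (ae_restrict_mem measurableSet_Ioi) hρint hρint2 hγ
  have := hmin.hasDerivAt_eq_zero (hF.sub ((hasDerivAt_id 0).const_mul (vinf - γ)))
  linarith

theorem absVI_zero_iff {ρinf : ℝ → ℝ} {vinf : ℝ} :
    AbsVI ρinf vinf 0 ↔ |vinf| ≤ ∫ a in Ioi (0:ℝ), ρinf a := by
  simp only [AbsVI, mul_zero, add_zero, abs_zero, zero_mul, integral_zero, sub_zero,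
    integral_const_mul]
  refine ⟨fun h => abs_le.mpr ⟨?_, ?_⟩, fun h w => ?_⟩
  · exact neg_le.mp (by simpa using h (-1))
  · simpa using h 1
  · calc vinf * w ≤ |vinf| * |w| := (le_abs_self _).trans (abs_mul _ _).le
      _ ≤ |w| * ∫ a in Ioi (0:ℝ), ρinf a := by
        rw [mul_comm]; exact mul_le_mul_of_nonneg_left h (abs_nonneg w)

theorem stmt_16_general
    (ρinf : ℝ → ℝ)
    (hρint : IntegrableOn ρinf (Ioi 0))
    (hρint2 : IntegrableOn (fun a => a * ρinf a) (Ioi 0))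
    (vinf μinf : ℝ)
    (hμ : μinf = ∫ a in Ioi (0:ℝ), ρinf a) :
    (∀ γ : ℝ, AbsVI ρinf vinf γ →
      (0 < γ → vinf = γ + μinf) ∧
      (γ < 0 → vinf = γ - μinf) ∧
      (γ = 0 → vinf ∈ Icc (-μinf) μinf)) ∧
    (vinf ∈ Icc (-μinf) μinf →
      AbsVI ρinf vinf 0 ∧ ∀ γ : ℝ, AbsVI ρinf vinf γ → γ = 0) := by
  subst hμ
  have eq_of_pos {γ} (h : AbsVI ρinf vinf γ) (hγ : 0 < γ) :
      vinf = γ + ∫ a in Ioi (0:ℝ), ρinf a := by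
    have := h.sub_eq_sign_mul hρint hρint2 hγ.ne'
    rw [sign_pos hγ, SignType.coe_one] at this
    linarith
  have eq_of_neg {γ} (h : AbsVI ρinf vinf γ) (hγ : γ < 0) :
      vinf = γ - ∫ a in Ioi (0:ℝ), ρinf a := by
    have := h.sub_eq_sign_mul hρint hρint2 hγ.ne
    rw [sign_neg hγ, SignType.coe_neg_one] at this
    linarith
  refine ⟨fun γ h => ⟨eq_of_pos h, eq_of_neg h, ?_⟩,
    fun hv => ⟨absVI_zero_iff.mpr (abs_le.mpr hv), ?_⟩⟩
  · rintro rfl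
    exact abs_le.mp (absVI_zero_iff.mp h)
  · intro γ h
    rcases lt_trichotomy γ 0 with hγ | rfl | hγ
    · linarith [eq_of_neg h hγ, hv.1]
    · rfl
    · linarith [eq_of_pos h hγ, hv.2]

/-- Velocity-force characterization for the constant-force potential `ψ(u) = |u|`, with
`μ_∞ = ∫₀^∞ ρ_∞`: (i) `γ > 0 → v_∞ = γ + μ_∞`; (ii) `γ < 0 → v_∞ = γ − μ_∞`;
(iii) `γ = 0 → v_∞ ∈ [−μ_∞, μ_∞]`; and conversely (iv) if `v_∞ ∈ [−μ_∞, μ_∞]` then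
`γ = 0` is the unique solution of the variational inequality. -/
theorem stmt_16
    (ρinf : ℝ → ℝ)
    (hρnonneg : ∀ a, 0 ≤ ρinf a)
    (hρint : IntegrableOn ρinf (Ioi 0))
    (hρint2 : IntegrableOn (fun a => a * ρinf a) (Ioi 0))
    (vinf μinf : ℝ)
    (hμ : μinf = ∫ a in Ioi (0:ℝ), ρinf a) :
    (∀ γ : ℝ, AbsVI ρinf vinf γ →
      (0 < γ → vinf = γ + μinf) ∧
      (γ < 0 → vinf = γ - μinf) ∧
      (γ = 0 → vinf ∈ Icc (-μinf) μinf)) ∧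
    (vinf ∈ Icc (-μinf) μinf →
      AbsVI ρinf vinf 0 ∧ ∀ γ : ℝ, AbsVI ρinf vinf γ → γ = 0) :=
  stmt_16_general ρinf hρint hρint2 vinf μinf hμ
end

section
/- Explicit kinematic solution for ψ(u) = |u| in the moving regime: Let ρ_∞ ∈ L¹([0,∞)) be positive and monotone nonincreasing with ∫₀^∞ a ρ_∞(a) da < ∞, set μ_∞(t) := ∫₀^t ρ_∞(a) da and μ_∞ := ∫₀^∞ ρ_∞(a) da, and let v_∞ ∉ [−μ_∞, μ_∞]. Then the Lipschitz function z : [0,∞) → ℝ with z(0) = z⁰ satisfying, for all t > 0 and all w ∈ ℝ, the variational inequality (v_∞ − ż(t)) w + ∫₀^t ρ_∞(a) |z(t) − z(t−a)| da ≤ ∫₀^t ρ_∞(a) |z(t) − z(t−a) + w| da, is given by z(t) = z⁰ + ∫₀^t ( v_∞ − sgn(v_∞) μ_∞(τ) ) dτ = z⁰ + γ t + sgn(v_∞) ∫₀^t ∫_τ^∞ ρ_∞(a) da dτ, where γ := v_∞ − sgn(v_∞) μ_∞. -/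
open MeasureTheory Set Filter

/-- Truncated mass `μ_∞(t) = ∫₀^t ρ_∞(a) da`. -/
noncomputable def truncMass (ρinf : ℝ → ℝ) (t : ℝ) : ℝ :=
  ∫ a in Set.Ioc (0:ℝ) t, ρinf a

/-- `z` is a Lipschitz solution, with `z(0) = z0`, of the variational inequality for the
potential `ψ(u) = |u|` and the kernel `ρ(a,t) = ρ_∞(a)·1_{a<t}`. -/
def SolAbsVI (ρinf : ℝ → ℝ) (vinf z0 : ℝ) (z : ℝ → ℝ) : Prop :=
  (∃ K : NNReal, LipschitzOnWith K z (Set.Ici 0)) ∧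
  z 0 = z0 ∧
  ∀ᵐ t ∂(MeasureTheory.volume.restrict (Set.Ioi (0:ℝ))),
    DifferentiableAt ℝ z t ∧
    ∀ w : ℝ,
      (vinf - deriv z t) * w + ∫ a in Set.Ioc (0:ℝ) t, ρinf a * |z t - z (t - a)|
        ≤ ∫ a in Set.Ioc (0:ℝ) t, ρinf a * |z t - z (t - a) + w|

/-!
By the symmetry `z ↦ -z`, `v ↦ -v` we may assume `v > μ_∞`. At a time `τ`, the variational
inequality says that `c = v - ż(τ)` is a subgradient at `0` of the convex function
`w ↦ ∫₀^τ ρ_∞(a) |z(τ) - z(τ - a) + w| da`. Testing with `w = 1` gives `c ≤ μ_∞(τ) ≤ μ_∞`, so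
`ż ≥ v - μ_∞ > 0` and `z` is strictly increasing. Then all delays `z(τ) - z(τ - a)` are positive,
the left derivative of that convex function at `0` is `-μ_∞(τ)` (dominated convergence), and
hence `c ≥ μ_∞(τ)`. So `ż(τ) = v - μ_∞(τ)` a.e., and integrating (a Lipschitz function is
absolutely continuous) gives the first formula; `μ_∞(τ) = μ_∞ - ∫_τ^∞ ρ_∞` gives the second.
-/

open Topology

section SubgradientOfAbs

variable {α : Type*} [MeasurableSpace α] {μ : Measure α} {ρ d : α → ℝ} {c : ℝ}

theorem le_integral_of_forall_mul_add_integral_mul_abs_le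
    (hρ : Integrable ρ μ) (hρ0 : 0 ≤ᵐ[μ] ρ) (hρd : Integrable (fun a => ρ a * |d a|) μ)
    (hc : ∀ w, c * w + ∫ a, ρ a * |d a| ∂μ ≤ ∫ a, ρ a * |d a + w| ∂μ) :
    c ≤ ∫ a, ρ a ∂μ := by
  have hle : ∫ a, ρ a * |d a + 1| ∂μ ≤ ∫ a, (ρ a * |d a| + ρ a) ∂μ := by
    refine integral_mono_of_nonneg ?_ (hρd.add hρ) ?_
    · filter_upwards [hρ0] with a ha using mul_nonneg ha (abs_nonneg _)
    · filter_upwards [hρ0] with a ha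
      have := mul_le_mul_of_nonneg_left ((abs_add_le (d a) 1).trans_eq (by rw [abs_one])) ha
      linarith
  have := hc 1
  rw [integral_add hρd hρ] at hle
  linarith

theorem integrable_mul_abs_add_const (hρ : Integrable ρ μ) (hρ0 : 0 ≤ᵐ[μ] ρ)
    (hd : AEStronglyMeasurable d μ) (hρd : Integrable (fun a => ρ a * |d a|) μ) (w : ℝ) :
    Integrable (fun a => ρ a * |d a + w|) μ := by
  refine (hρd.add (hρ.mul_const |w|)).mono' ?_ ?_
  · exact hρ.aestronglyMeasurable.mul (hd.add aestronglyMeasurable_const).norm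
  · filter_upwards [hρ0] with a ha
    rw [norm_mul, Real.norm_of_nonneg ha, Real.norm_eq_abs, abs_abs, Pi.add_apply, ← mul_add]
    exact mul_le_mul_of_nonneg_left (abs_add_le (d a) w) ha

theorem integral_le_of_forall_mul_add_integral_mul_abs_le
    (hρ : Integrable ρ μ) (hρ0 : 0 ≤ᵐ[μ] ρ) (hd : AEStronglyMeasurable d μ)
    (hρd : Integrable (fun a => ρ a * |d a|) μ) (hdpos : ∀ᵐ a ∂μ, 0 < d a)
    (hc : ∀ w, c * w + ∫ a, ρ a * |d a| ∂μ ≤ ∫ a, ρ a * |d a + w| ∂μ) :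
    ∫ a, ρ a ∂μ ≤ c := by
  set F : ℝ → α → ℝ := fun ε a => (ρ a * |d a| - ρ a * |d a + -ε|) / ε
  have hF_int : ∀ ε, Integrable (F ε) μ := fun ε =>
    (hρd.sub (integrable_mul_abs_add_const hρ hρ0 hd hρd (-ε))).div_const ε
  have hF_le : ∀ ε > 0, ∫ a, F ε a ∂μ ≤ c := fun ε hε => by
    rw [integral_div, integral_sub hρd (integrable_mul_abs_add_const hρ hρ0 hd hρd (-ε)),
      div_le_iff₀ hε]
    linarith [hc (-ε)]
  have hF_tendsto : Tendsto (fun ε => ∫ a, F ε a ∂μ) (𝓝[>] 0) (𝓝 (∫ a, ρ a ∂μ)) := by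
    refine tendsto_integral_filter_of_dominated_convergence ρ
      (Eventually.of_forall fun ε => (hF_int ε).aestronglyMeasurable) ?_ hρ ?_
    · filter_upwards [self_mem_nhdsWithin] with ε (hε : 0 < ε)
      filter_upwards [hρ0] with a ha
      rw [Real.norm_eq_abs, abs_div, abs_of_pos hε, div_le_iff₀ hε, ← mul_sub, abs_mul,
        abs_of_nonneg ha]
      refine mul_le_mul_of_nonneg_left ((abs_abs_sub_abs_le_abs_sub _ _).trans ?_) ha
      simp [abs_of_pos hε]
    · filter_upwards [hdpos] with a ha
      refine tendsto_const_nhds.congr' ?_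
      filter_upwards [Ioo_mem_nhdsGT ha] with ε hε
      simp only [F]
      rw [abs_of_pos ha, abs_of_pos (by linarith [hε.2]), ← mul_sub,
        show d a - (d a + -ε) = ε by ring, mul_div_cancel_right₀ _ hε.1.ne']
  exact le_of_tendsto hF_tendsto (eventually_mem_nhdsWithin.mono hF_le)

end SubgradientOfAbs

theorem AbsolutelyContinuousOnInterval.mul_sub_le_sub {f : ℝ → ℝ} {a b δ : ℝ}
    (hf : AbsolutelyContinuousOnInterval f a b) (hab : a ≤ b)
    (hδ : ∀ᵐ t ∂volume.restrict (Ioc a b), δ ≤ deriv f t) : δ * (b - a) ≤ f b - f a := by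
  rw [← hf.integral_deriv_eq_sub, intervalIntegral.integral_of_le hab]
  calc δ * (b - a) = ∫ _ in Ioc a b, δ := by
        rw [setIntegral_const, measureReal_def, Real.volume_Ioc,
          ENNReal.toReal_ofReal (sub_nonneg.2 hab), smul_eq_mul, mul_comm]
    _ ≤ ∫ t in Ioc a b, deriv f t :=
        setIntegral_mono_ae_restrict (integrableOn_const measure_Ioc_lt_top.ne)
          ((intervalIntegrable_iff_integrableOn_Ioc_of_le hab).1 hf.intervalIntegrable_deriv) hδ

theorem LipschitzOnWith.integral_deriv_eq_sub {f : ℝ → ℝ} {K : NNReal} {s : Set ℝ}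
    (hf : LipschitzOnWith K f s) {a b : ℝ} (hab : uIcc a b ⊆ s) :
    ∫ t in a..b, deriv f t = f b - f a :=
  (hf.mono hab).absolutelyContinuousOnInterval.integral_deriv_eq_sub

section TruncMass

variable {ρ : ℝ → ℝ}

theorem truncMass_le_integral_Ioi (hρ : IntegrableOn ρ (Ioi 0)) (hρ0 : ∀ a > 0, 0 ≤ ρ a)
    (τ : ℝ) : truncMass ρ τ ≤ ∫ a in Ioi 0, ρ a :=
  setIntegral_mono_set hρ ((ae_restrict_mem measurableSet_Ioi).mono hρ0)
    Ioc_subset_Ioi_self.eventuallyLE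

theorem truncMass_add_integral_Ioi (hρ : IntegrableOn ρ (Ioi 0)) {τ : ℝ} (hτ : 0 ≤ τ) :
    truncMass ρ τ + ∫ a in Ioi τ, ρ a = ∫ a in Ioi 0, ρ a := by
  rw [truncMass, ← setIntegral_union (Ioc_disjoint_Ioi le_rfl) measurableSet_Ioi
    (hρ.mono_set Ioc_subset_Ioi_self) (hρ.mono_set (Ioi_subset_Ioi hτ)),
    Ioc_union_Ioi_eq_Ioi hτ]

theorem integrableOn_Ioc_mul_of_continuousOn (hρ : IntegrableOn ρ (Ioi 0)) {g : ℝ → ℝ}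
    {τ : ℝ} (hg : ContinuousOn g (Icc 0 τ)) :
    IntegrableOn (fun a => ρ a * g a) (Ioc 0 τ) :=
  (hρ.mono_set Ioc_subset_Ioi_self).mul_continuousOn_of_subset hg measurableSet_Ioc
    isCompact_Icc Ioc_subset_Icc_self

theorem continuousOn_truncMass (hρ : IntegrableOn ρ (Ioi 0)) {t : ℝ} (ht : 0 ≤ t) :
    ContinuousOn (truncMass ρ) (Icc 0 t) := by
  have hprim := intervalIntegral.continuousOn_primitive_interval' (a := 0)
    ((intervalIntegrable_iff_integrableOn_Ioc_of_le ht).2 (hρ.mono_set Ioc_subset_Ioi_self))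
    left_mem_uIcc
  rw [uIcc_of_le ht] at hprim
  exact hprim.congr fun τ hτ => (intervalIntegral.integral_of_le hτ.1).symm

theorem integral_sub_mul_truncMass (hρ : IntegrableOn ρ (Ioi 0)) (v s : ℝ) {t : ℝ}
    (ht : 0 ≤ t) :
    ∫ τ in Ioc 0 t, (v - s * truncMass ρ τ)
      = (v - s * ∫ a in Ioi 0, ρ a) * t + s * ∫ τ in Ioc 0 t, ∫ a in Ioi τ, ρ a := by
  have hint : IntegrableOn (truncMass ρ) (Ioc 0 t) :=
    ((continuousOn_truncMass hρ ht).integrableOn_compact isCompact_Icc).mono_set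
      Ioc_subset_Icc_self
  have htail : ∫ τ in Ioc 0 t, ∫ a in Ioi τ, ρ a
      = ∫ τ in Ioc 0 t, ((∫ a in Ioi 0, ρ a) - truncMass ρ τ) :=
    setIntegral_congr_fun measurableSet_Ioc fun τ hτ => by
      rw [← truncMass_add_integral_Ioi hρ hτ.1.le, add_sub_cancel_left]
  have hconst : ∀ c : ℝ, IntegrableOn (fun _ => c) (Ioc 0 t) := fun c =>
    integrableOn_const measure_Ioc_lt_top.ne
  have hvol : volume.real (Ioc 0 t) = t := by simp [ht]
  rw [htail, integral_sub (hconst v) (hint.const_mul s), integral_sub (hconst _) hint,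
    integral_const_mul, setIntegral_const, setIntegral_const, hvol, smul_eq_mul, smul_eq_mul]
  ring

end TruncMass

namespace SolAbsVI

variable {ρ : ℝ → ℝ} {v z0 : ℝ} {z : ℝ → ℝ}

theorem continuousOn (hz : SolAbsVI ρ v z0 z) : ContinuousOn z (Ici 0) :=
  hz.1.choose_spec.continuousOn

theorem continuousOn_delay (hz : SolAbsVI ρ v z0 z) (τ : ℝ) :
    ContinuousOn (fun a => z τ - z (τ - a)) (Icc 0 τ) :=
  continuousOn_const.sub <| hz.continuousOn.comp (continuousOn_const.sub continuousOn_id)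
    fun a ha => show 0 ≤ τ - a by linarith [ha.2]

theorem ae_sub_truncMass_le_deriv (hz : SolAbsVI ρ v z0 z) (hρ : IntegrableOn ρ (Ioi 0))
    (hρ0 : ∀ a > 0, 0 ≤ ρ a) :
    ∀ᵐ τ ∂volume.restrict (Ioi 0), v - truncMass ρ τ ≤ deriv z τ := by
  filter_upwards [hz.2.2] with τ hτ
  have := le_integral_of_forall_mul_add_integral_mul_abs_le
    (hρ.mono_set Ioc_subset_Ioi_self)
    ((ae_restrict_mem measurableSet_Ioc).mono fun a ha => hρ0 a ha.1)
    (integrableOn_Ioc_mul_of_continuousOn hρ (hz.continuousOn_delay τ).abs) hτ.2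
  rw [← truncMass] at this
  linarith

theorem strictMonoOn (hz : SolAbsVI ρ v z0 z) (hρ : IntegrableOn ρ (Ioi 0))
    (hρ0 : ∀ a > 0, 0 ≤ ρ a) (hv : ∫ a in Ioi 0, ρ a < v) : StrictMonoOn z (Ici 0) := by
  intro s hs u hu hsu
  obtain ⟨K, hK⟩ := hz.1
  have hmono : ∀ᵐ τ ∂volume.restrict (Ioc s u), v - ∫ a in Ioi 0, ρ a ≤ deriv z τ := by
    refine ae_mono (Measure.restrict_mono (fun τ hτ => lt_of_le_of_lt hs hτ.1) le_rfl) ?_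
    filter_upwards [hz.ae_sub_truncMass_le_deriv hρ hρ0] with τ hτ
    linarith [truncMass_le_integral_Ioi hρ hρ0 τ]
  have := (hK.mono (ordConnected_Ici.uIcc_subset hs hu)).absolutelyContinuousOnInterval
    |>.mul_sub_le_sub hsu.le hmono
  exact sub_pos.1 <| (mul_pos (sub_pos.2 hv) (sub_pos.2 hsu)).trans_le this

theorem ae_deriv_eq (hz : SolAbsVI ρ v z0 z) (hρ : IntegrableOn ρ (Ioi 0))
    (hρ0 : ∀ a > 0, 0 ≤ ρ a) (hv : ∫ a in Ioi 0, ρ a < v) :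
    ∀ᵐ τ ∂volume.restrict (Ioi 0), deriv z τ = v - truncMass ρ τ := by
  filter_upwards [hz.2.2, hz.ae_sub_truncMass_le_deriv hρ hρ0,
    ae_restrict_mem measurableSet_Ioi] with τ hτ hlow (hτ0 : 0 < τ)
  have hdelay_pos : ∀ᵐ a ∂volume.restrict (Ioc 0 τ), 0 < z τ - z (τ - a) := by
    filter_upwards [ae_restrict_mem measurableSet_Ioc] with a ha
    exact sub_pos.2 <| hz.strictMonoOn hρ hρ0 hv (show 0 ≤ τ - a by linarith [ha.2])
      hτ0.le (by linarith [ha.1])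
  have := integral_le_of_forall_mul_add_integral_mul_abs_le
    (hρ.mono_set Ioc_subset_Ioi_self)
    ((ae_restrict_mem measurableSet_Ioc).mono fun a ha => hρ0 a ha.1)
    (((hz.continuousOn_delay τ).mono Ioc_subset_Icc_self).aestronglyMeasurable
      measurableSet_Ioc)
    (integrableOn_Ioc_mul_of_continuousOn hρ (hz.continuousOn_delay τ).abs) hdelay_pos hτ.2
  rw [← truncMass] at this
  linarith

theorem eq_integral_of_lt (hz : SolAbsVI ρ v z0 z) (hρ : IntegrableOn ρ (Ioi 0))
    (hρ0 : ∀ a > 0, 0 ≤ ρ a) (hv : ∫ a in Ioi 0, ρ a < v) {t : ℝ} (ht : 0 ≤ t) :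
    z t = z0 + ∫ τ in Ioc 0 t, (v - truncMass ρ τ) := by
  obtain ⟨K, hK⟩ := hz.1
  have hftc := hK.integral_deriv_eq_sub (ordConnected_Ici.uIcc_subset self_mem_Ici ht)
  rw [intervalIntegral.integral_of_le ht, hz.2.1] at hftc
  rw [← setIntegral_congr_ae measurableSet_Ioc ?_, hftc]
  · ring
  · filter_upwards [(ae_restrict_iff' measurableSet_Ioi).1 (hz.ae_deriv_eq hρ hρ0 hv)]
      with τ hτ hτ0 using hτ hτ0.1

theorem neg (hz : SolAbsVI ρ v z0 z) : SolAbsVI ρ (-v) (-z0) (-z) := by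
  obtain ⟨⟨K, hK⟩, hz0, hvi⟩ := hz
  refine ⟨⟨K, hK.neg⟩, by simp [hz0], ?_⟩
  filter_upwards [hvi] with t ⟨hd, hvi⟩
  refine ⟨hd.neg, fun w => ?_⟩
  have habs : ∀ a w, |(-z) t - (-z) (t - a) + w| = |z t - z (t - a) + -w| := fun a w => by
    rw [← abs_neg]; simp only [Pi.neg_apply]; ring_nf
  have habs0 : ∀ a, |(-z) t - (-z) (t - a)| = |z t - z (t - a)| := fun a => by
    simpa using habs a 0
  simp only [deriv.neg', habs, habs0]
  linarith [hvi (-w)]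

theorem eq_integral (hz : SolAbsVI ρ v z0 z) (hρ : IntegrableOn ρ (Ioi 0))
    (hρ0 : ∀ a > 0, 0 ≤ ρ a) (hv : v ∉ Icc (-∫ a in Ioi 0, ρ a) (∫ a in Ioi 0, ρ a)) {t : ℝ}
    (ht : 0 ≤ t) : z t = z0 + ∫ τ in Ioc 0 t, (v - Real.sign v * truncMass ρ τ) := by
  have hμ0 : 0 ≤ ∫ a in Ioi 0, ρ a := setIntegral_nonneg measurableSet_Ioi hρ0
  simp only [mem_Icc, not_and_or, not_le] at hv
  rcases hv with hv | hv
  · have h := hz.neg.eq_integral_of_lt hρ hρ0 (by linarith) ht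
    have hint : ∫ τ in Ioc 0 t, (v - -1 * truncMass ρ τ)
        = -∫ τ in Ioc 0 t, (-v - truncMass ρ τ) := by
      rw [← integral_neg]
      exact integral_congr_ae (Eventually.of_forall fun τ => by ring)
    rw [Real.sign_of_neg (by linarith), hint]
    simp only [Pi.neg_apply] at h
    linarith
  · simpa only [Real.sign_of_pos (hμ0.trans_lt hv), one_mul]
      using hz.eq_integral_of_lt hρ hρ0 hv ht

end SolAbsVI

theorem stmt_18_general
    (ρinf : ℝ → ℝ)
    (hρpos : ∀ a > (0:ℝ), 0 < ρinf a)
    (hρint : IntegrableOn ρinf (Ioi 0))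
    (vinf z0 μinf : ℝ)
    (hμ : μinf = ∫ a in Ioi (0:ℝ), ρinf a)
    (hv : vinf ∉ Icc (-μinf) μinf) :
    ∀ z : ℝ → ℝ, SolAbsVI ρinf vinf z0 z →
      ∀ t ≥ (0:ℝ),
        z t = z0 + ∫ τ in Ioc (0:ℝ) t, (vinf - Real.sign vinf * truncMass ρinf τ) ∧
        z t = z0 + (vinf - Real.sign vinf * μinf) * t
          + Real.sign vinf * ∫ τ in Ioc (0:ℝ) t, ∫ a in Ioi τ, ρinf a := by
  subst hμ
  intro z hz t ht
  have h := hz.eq_integral hρint (fun a ha => (hρpos a ha).le) hv ht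
  exact ⟨h, by rw [h, integral_sub_mul_truncMass hρint _ _ ht]; ring⟩

/-- Explicit kinematic solution for `ψ(u) = |u|` in the moving regime
`v_∞ ∉ [−μ_∞, μ_∞]`: any Lipschitz solution with `z(0) = z⁰` is
`z(t) = z⁰ + ∫₀^t (v_∞ − sgn(v_∞) μ_∞(τ)) dτ
      = z⁰ + γ t + sgn(v_∞) ∫₀^t ∫_τ^∞ ρ_∞(a) da dτ`,
where `γ = v_∞ − sgn(v_∞) μ_∞`. -/
theorem stmt_18
    (ρinf : ℝ → ℝ)
    (hρpos : ∀ a > (0:ℝ), 0 < ρinf a)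
    (hρmono : AntitoneOn ρinf (Ioi 0))
    (hρint : IntegrableOn ρinf (Ioi 0))
    (hρint2 : IntegrableOn (fun a => a * ρinf a) (Ioi 0))
    (vinf z0 μinf : ℝ)
    (hμ : μinf = ∫ a in Ioi (0:ℝ), ρinf a)
    (hv : vinf ∉ Icc (-μinf) μinf) :
    ∀ z : ℝ → ℝ, SolAbsVI ρinf vinf z0 z →
      ∀ t ≥ (0:ℝ),
        z t = z0 + ∫ τ in Ioc (0:ℝ) t, (vinf - Real.sign vinf * truncMass ρinf τ) ∧
        z t = z0 + (vinf - Real.sign vinf * μinf) * t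
          + Real.sign vinf * ∫ τ in Ioc (0:ℝ) t, ∫ a in Ioi τ, ρinf a :=
  stmt_18_general ρinf hρpos hρint vinf z0 μinf hμ hv
end
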